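/- arXiv:2101.01156 — 3 statements merged into one kernel-verified Lean document; each statement's English description precedes it below -/
import Mathlib

section
/- If the fitness sequence a satisfies (H1^PAT,ζ) and (H2^PAT), then almost surely Σ_{i=n}^∞ ( w^a_i / W^a_i )² = O(1/n), i.e. there exists a (random) constant C such that for all n≥1, Σ_{i=n}^∞ ( w^a_i / W^a_i )² ≤ C/n. -/
noncomputable section
open scoped Classical
open MeasureTheory ProbabilityTheory Finset Filter

namespace WRTHeight

/-! ### Trees encoded by parent functions -/

/-- Truncated parent map: the parent of vertex `n ≥ 2` is `par n`, forced to be `< n`;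
the root `1` (and the irrelevant `0`) get parent `0`. -/
def parentFun (par : ℕ → ℕ) (n : ℕ) : ℕ := if n ≤ 1 then 0 else min (par n) (n - 1)

lemma parentFun_lt (par : ℕ → ℕ) {n : ℕ} (hn : 1 ≤ n) : parentFun par n < n := by
  unfold parentFun; split <;> omega

/-- Height of vertex `n` in the tree encoded by `par`. -/
def htFun (par : ℕ → ℕ) (n : ℕ) : ℕ :=
  if h : n ≤ 1 then 0 else htFun par (parentFun par n) + 1
termination_by n
decreasing_by exact parentFun_lt par (by omega)

/-- Most recent ancestor of vertex `n` whose label is at most `k`. -/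
def ancFun (par : ℕ → ℕ) (k n : ℕ) : ℕ :=
  if n ≤ k then n else if h : n ≤ 1 then n else ancFun par k (parentFun par n)
termination_by n
decreasing_by exact parentFun_lt par (by omega)

/-- Most recent common ancestor (its label) of vertices `i` and `j`. -/
def mrcaFun (par : ℕ → ℕ) (i j : ℕ) : ℕ :=
  if h0 : i = j then i
  else if h1 : j < i then mrcaFun par (parentFun par i) j
  else mrcaFun par i (parentFun par j)
termination_by i + j
decreasing_by
  · have := parentFun_lt par (n := i) (by omega); omega
  · have := parentFun_lt par (n := j) (by omega); omega

/-- Graph distance between vertices `i` and `j` in the tree encoded by `par`. -/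
def distFun (par : ℕ → ℕ) (i j : ℕ) : ℕ :=
  htFun par i + htFun par j - 2 * htFun par (mrcaFun par i j)

/-- Height of the tree with vertices `1, …, n`. -/
def treeHeight (par : ℕ → ℕ) (n : ℕ) : ℕ := (Finset.Icc 1 n).sup (htFun par)

/-- Diameter of the tree with vertices `1, …, n`. -/
def treeDiam (par : ℕ → ℕ) (n : ℕ) : ℕ :=
  ((Finset.Icc 1 n) ×ˢ (Finset.Icc 1 n)).sup fun p => distFun par p.1 p.2

/-- Out-degree of vertex `k` in the tree with vertices `1, …, n`. -/
def outDeg (par : ℕ → ℕ) (n k : ℕ) : ℕ :=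
  ((Finset.Icc 2 n).filter fun m => parentFun par m = k).card

/-! ### Weights and assumptions -/

/-- Partial sums `W_n = w_1 + ⋯ + w_n`. -/
def psum (w : ℕ → ℝ) (n : ℕ) : ℝ := ∑ i ∈ Finset.Icc 1 n, w i

/-- The weights are nonnegative and `w₁ > 0`. -/
def GoodWeights (w : ℕ → ℝ) : Prop := 0 < w 1 ∧ ∀ n, 1 ≤ n → 0 ≤ w n

/-- Assumption `(H_{1,γ})`: `W_n = λ n^γ + O(n^{γ-α})` for some `λ>0`, `α ∈ (0,1)`. -/
def H1 (w : ℕ → ℝ) (γ : ℝ) : Prop :=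
  0 < γ ∧ ∃ lam > (0:ℝ), ∃ α ∈ Set.Ioo (0:ℝ) 1, ∃ C > (0:ℝ),
    ∀ n : ℕ, 1 ≤ n → |psum w n - lam * (n:ℝ) ^ γ| ≤ C * (n:ℝ) ^ (γ - α)

/-- Assumption `(H₂)`: `∑_{i ≥ n} (w_i/W_i)² = O(1/n)`. -/
def H2 (w : ℕ → ℝ) : Prop :=
  Summable (fun i : ℕ => (w i / psum w i) ^ 2) ∧
  ∃ C > (0:ℝ), ∀ n : ℕ, 1 ≤ n →
    (∑' i : ℕ, (w (n + i) / psum w (n + i)) ^ 2) ≤ C / n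

/-- `θ` is the (unique) positive solution of `1 + γ(e^θ - 1 - θ e^θ) = 0`. -/
def IsTheta (γ θ : ℝ) : Prop :=
  0 < θ ∧ 1 + γ * (Real.exp θ - 1 - θ * Real.exp θ) = 0

/-- The weighted recursive tree process with weight sequence `w`: the parent labels
`par (n+1)` are independent with `P(par (n+1) = k) = w_k / W_n` for `1 ≤ k ≤ n`. -/
def IsWRT {Ω : Type*} [MeasurableSpace Ω] (P : Measure Ω) (w : ℕ → ℝ)
    (par : ℕ → Ω → ℕ) : Prop :=
  (∀ n, Measurable (par n)) ∧
  iIndepFun par P ∧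
  ∀ n : ℕ, 1 ≤ n → ∀ k : ℕ, 1 ≤ k → k ≤ n →
    P {ω | par (n + 1) ω = k} = ENNReal.ofReal (w k / psum w n)

/-- The preferential attachment tree with additive fitnesses `a`. -/
def IsPAT {Ω : Type*} [MeasurableSpace Ω] (P : Measure Ω) (a : ℕ → ℝ)
    (par : ℕ → Ω → ℕ) : Prop :=
  (∀ n, Measurable (par n)) ∧
  P {ω | par 2 ω = 1} = 1 ∧
  ∀ n : ℕ, 2 ≤ n → ∀ k : ℕ, 1 ≤ k → k ≤ n → ∀ j : ℕ → ℕ,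
    P ({ω | par (n + 1) ω = k} ∩ {ω | ∀ i ∈ Finset.Icc 2 n, par i ω = j i})
      = ENNReal.ofReal (((outDeg j n k : ℝ) + a k) / (((n : ℝ) - 1) + psum a n))
        * P {ω | ∀ i ∈ Finset.Icc 2 n, par i ω = j i}

/-- Assumption `(H₁^PAT)`: `A_n = ζ n + O(n^{1-δ})`. -/
def H1PAT (a : ℕ → ℝ) (ζ : ℝ) : Prop :=
  0 < ζ ∧ ∃ δ > (0:ℝ), ∃ C > (0:ℝ),
    ∀ n : ℕ, 1 ≤ n → |psum a n - ζ * n| ≤ C * (n:ℝ) ^ ((1:ℝ) - δ)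

/-- Assumption `(H₂^PAT)`: `∑_{i=1}^n a_i² = O(n)`. -/
def H2PAT (a : ℕ → ℝ) : Prop :=
  ∃ C > (0:ℝ), ∀ n : ℕ, 1 ≤ n → (∑ i ∈ Finset.Icc 1 n, (a i) ^ 2) ≤ C * n

/-- Tightness of a family of real random variables indexed by `s ⊆ ℕ`. -/
def Tight {Ω : Type*} [MeasurableSpace Ω] (P : Measure Ω) (s : Set ℕ)
    (X : ℕ → Ω → ℝ) : Prop :=
  ∀ ε : ℝ, 0 < ε → ∃ M : ℝ, 0 < M ∧ ∀ n ∈ s, P {ω | M ≤ |X n ω|} ≤ ENNReal.ofReal ε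

/-! ### Tilted quantities -/

/-- `p_i = e^θ (w_i/W_i) / (1 + (e^θ - 1) w_i/W_i)`. -/
def pWeight (w : ℕ → ℝ) (θ : ℝ) (i : ℕ) : ℝ :=
  Real.exp θ * (w i / psum w i) / (1 + (Real.exp θ - 1) * (w i / psum w i))

/-- `Z_n = ∏_{i=2}^n (1 + (e^θ - 1) w_i/W_i)`. -/
def ZFun (w : ℕ → ℝ) (θ : ℝ) (n : ℕ) : ℝ :=
  ∏ i ∈ Finset.Icc 2 n, (1 + (Real.exp θ - 1) * (w i / psum w i))

/-- `i_k = inf { i ≥ 1 : ∑_{j=2}^i p_j ≥ k }` (with `i_0 = 1`). -/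
def iIdx (w : ℕ → ℝ) (θ : ℝ) (k : ℕ) : ℕ :=
  sInf {i : ℕ | 1 ≤ i ∧ (k : ℝ) ≤ ∑ j ∈ Finset.Icc 2 i, pWeight w θ j}

/-- `τ(n) = min { t : i_t ≥ n }`. -/
def tauFun (w : ℕ → ℝ) (θ : ℝ) (n : ℕ) : ℕ := sInf {t : ℕ | n ≤ iIdx w θ t}

/-- `x_n = ⌊(3/(2θ)) log log n⌋`. -/
def xLog (θ : ℝ) (n : ℕ) : ℤ := ⌊3 / (2 * θ) * Real.log (Real.log n)⌋

/-- Modified weight sequence `w^{(N)}`. -/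
def wMod (w : ℕ → ℝ) (N : ℕ) (i : ℕ) : ℝ :=
  if i = 1 then psum w N else if i ≤ N then 0 else w i

/-- Recentered trajectory `ht(u_m(i_k)) - k` of the vertex `m`. -/
def trajZ (w : ℕ → ℝ) (θ : ℝ) (par : ℕ → ℕ) (m k : ℕ) : ℤ :=
  (htFun par (ancFun par (iIdx w θ k) m) : ℤ) - (k : ℤ)

/-! ### Sequences of i.i.d. uniforms, the spine walks -/

/-- The uniform distribution on `(0,1)`. -/
def unifMeasure : Measure ℝ := volume.restrict (Set.Ioo 0 1)

/-- An i.i.d. sequence of uniforms on `(0,1)`. -/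
def IsIIDUniform {Ω : Type*} [MeasurableSpace Ω] (P : Measure Ω) (U : ℕ → Ω → ℝ) : Prop :=
  (∀ i, Measurable (U i)) ∧ iIndepFun U P ∧
    ∀ i, Measure.map (U i) P = unifMeasure

/-- Two jointly independent i.i.d. sequences of uniforms on `(0,1)`. -/
def IsIIDUniform2 {Ω : Type*} [MeasurableSpace Ω] (P : Measure Ω)
    (U V : ℕ → Ω → ℝ) : Prop :=
  (∀ i, Measurable (U i)) ∧ (∀ i, Measurable (V i)) ∧
  iIndepFun (Sum.elim U V) P ∧
  (∀ i, Measure.map (U i) P = unifMeasure) ∧ (∀ i, Measure.map (V i) P = unifMeasure)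

/-- `p^ℓ_i` from the many-to-two lemma. -/
def pEll (w : ℕ → ℝ) (θ : ℝ) (ℓ i : ℕ) : ℝ :=
  if i < ℓ then pWeight w θ i
  else if i = ℓ then 1
  else pWeight w θ i * (1 - w i / psum w i) / (1 - pWeight w θ i * (w i / psum w i))

/-- The walk `H^ℓ_i = ∑_{j=2}^i 1{U_j ≤ p^ℓ_j}`. -/
def HEll {Ω : Type*} (w : ℕ → ℝ) (θ : ℝ) (U : ℕ → Ω → ℝ) (ℓ i : ℕ) (ω : Ω) : ℕ :=
  ∑ j ∈ Finset.Icc 2 i, if U j ω ≤ pEll w θ ℓ j then 1 else 0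

/-- The walk `H̄^ℓ` of the second spine. -/
def HBarEll {Ω : Type*} (w : ℕ → ℝ) (θ : ℝ) (U V : ℕ → Ω → ℝ) (ℓ i : ℕ) (ω : Ω) : ℕ :=
  if i ≤ ℓ then HEll w θ U ℓ i ω
  else HEll w θ U ℓ ℓ ω + ∑ j ∈ Finset.Icc (ℓ + 1) i,
    if V j ω ≤ pWeight w θ j *
        (if HEll w θ U ℓ j ω = HEll w θ U ℓ (j - 1) ω then 1 else 0) then 1 else 0

/-- `π_ℓ = p_ℓ q_ℓ ∏_{i=ℓ+1}^n (1 - p_i q_i)`, with the convention `p₁ = q₁ = 1`. -/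
def piEll (w : ℕ → ℝ) (θ : ℝ) (n ℓ : ℕ) : ℝ :=
  pWeight w θ ℓ * (w ℓ / psum w ℓ)
    * ∏ i ∈ Finset.Icc (ℓ + 1) n, (1 - pWeight w θ i * (w i / psum w i))

/-! ### Poisson walks, ladder heights and renewal functions -/

/-- The Poisson distribution with mean `1` on `ℕ`. -/
def poissonOneMeasure : Measure ℕ := (poissonPMF 1).toMeasure

/-- A random walk started at `0` with i.i.d. increments distributed as `Poisson(1) - 1`. -/
def IsPoissonWalk {Ω : Type*} [MeasurableSpace Ω] (P : Measure Ω) (S : ℕ → Ω → ℤ) : Prop :=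
  (∀ k, Measurable (S k)) ∧ (∀ ω, S 0 ω = 0) ∧
  iIndepFun (fun k ω => S (k + 1) ω - S k ω) P ∧
  ∀ k, Measure.map (fun ω => S (k + 1) ω - S k ω) P
        = Measure.map (fun m : ℕ => (m : ℤ) - 1) poissonOneMeasure

/-- A random walk started at `0` with i.i.d. increments distributed as `1 - Poisson(1)`. -/
def IsOneMinusPoissonWalk {Ω : Type*} [MeasurableSpace Ω] (P : Measure Ω)
    (S : ℕ → Ω → ℤ) : Prop :=
  (∀ k, Measurable (S k)) ∧ (∀ ω, S 0 ω = 0) ∧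
  iIndepFun (fun k ω => S (k + 1) ω - S k ω) P ∧
  ∀ k, Measure.map (fun ω => S (k + 1) ω - S k ω) P
        = Measure.map (fun m : ℕ => 1 - (m : ℤ)) poissonOneMeasure

/-- The `k`-th strict ascending ladder epoch of the path `n ↦ S n ω`. -/
def ladderEpoch {Ω : Type*} (S : ℕ → Ω → ℤ) (ω : Ω) : ℕ → ℕ
  | 0 => 0
  | k + 1 => sInf {n | ladderEpoch S ω k < n ∧ S (ladderEpoch S ω k) ω < S n ω}

/-- The `k`-th strict ascending ladder height. -/
def ladderHeight {Ω : Type*} (S : ℕ → Ω → ℤ) (ω : Ω) (k : ℕ) : ℤ :=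
  S (ladderEpoch S ω k) ω

/-- The renewal function `R(x) = ∑_k P(H_k ≤ x)` of the ladder height process of `S`. -/
def renewalFn {Ω : Type*} [MeasurableSpace Ω] (P : Measure Ω) (S : ℕ → Ω → ℤ)
    (x : ℝ) : ℝ :=
  ∑' k : ℕ, (P {ω | ((ladderHeight S ω k : ℤ) : ℝ) ≤ x}).toReal

/-! ### The generic inhomogeneous walk `S^{(r,j)}` -/

/-- Conditions on the data `(r, j)`: `r_i ∈ [0,1]`, `j` strictly increasing, `j₀ = 1`. -/
def GoodRJ (r : ℕ → ℝ) (jseq : ℕ → ℕ) : Prop :=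
  (∀ i, r i ∈ Set.Icc (0:ℝ) 1) ∧ StrictMono jseq ∧ jseq 0 = 1

/-- `Y_k = ∑_{j = j_{k-1}+1}^{j_k} 1{U_j ≤ r_j}`. -/
def Ywalk {Ω : Type*} (r : ℕ → ℝ) (jseq : ℕ → ℕ) (U : ℕ → Ω → ℝ) (k : ℕ) (ω : Ω) : ℕ :=
  ∑ j ∈ Finset.Icc (jseq (k - 1) + 1) (jseq k), if U j ω ≤ r j then 1 else 0

/-- `S_k = (∑_{ℓ=1}^k Y_ℓ) - k`. -/
def Swalk {Ω : Type*} (r : ℕ → ℝ) (jseq : ℕ → ℕ) (U : ℕ → Ω → ℝ) (k : ℕ) (ω : Ω) : ℤ :=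
  ((∑ ℓ ∈ Finset.Icc 1 k, Ywalk r jseq U ℓ ω : ℕ) : ℤ) - (k : ℤ)

/-- `δ_k = |E[Y_k] - 1|`. -/
def deltaW {Ω : Type*} [MeasurableSpace Ω] (P : Measure Ω) (r : ℕ → ℝ) (jseq : ℕ → ℕ)
    (U : ℕ → Ω → ℝ) (k : ℕ) : ℝ :=
  |(∫ ω, (Ywalk r jseq U k ω : ℝ) ∂P) - 1|

/-- `Δ_k = max_{0 ≤ ℓ ≤ k} |E[S_ℓ]|`. -/
def DeltaW {Ω : Type*} [MeasurableSpace Ω] (P : Measure Ω) (r : ℕ → ℝ) (jseq : ℕ → ℕ)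
    (U : ℕ → Ω → ℝ) (k : ℕ) : ℝ :=
  (Finset.Icc 0 k).sup' (Finset.nonempty_Icc.mpr (Nat.zero_le k))
    (fun ℓ => |∫ ω, ((Swalk r jseq U ℓ ω : ℤ) : ℝ) ∂P|)

/-- `η_k`. -/
def etaW {Ω : Type*} [MeasurableSpace Ω] (P : Measure Ω) (r : ℕ → ℝ) (jseq : ℕ → ℕ)
    (U : ℕ → Ω → ℝ) (k : ℕ) : ℝ :=
  2 * (∑ j ∈ Finset.Icc (jseq (Nat.floor ((k:ℝ) ^ ((1:ℝ)/4))) + 1) (jseq k), (r j) ^ 2)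
  + 2 * (∑ ℓ ∈ Finset.Icc (Nat.floor ((k:ℝ) ^ ((1:ℝ)/4))) k, deltaW P r jseq U ℓ)


/-- The Beta distribution `Beta(a,b)` on `ℝ`, with the convention `Beta(a,0) = δ₁`. -/
def betaMeasure (a b : ℝ) : Measure ℝ :=
  if b = 0 then Measure.dirac 1
  else (volume.restrict (Set.Ioo (0:ℝ) 1)).withDensity
    (fun x => ENNReal.ofReal
      (Real.Gamma (a + b) / (Real.Gamma a * Real.Gamma b)
        * x ^ (a - 1) * (1 - x) ^ (b - 1)))

/-- Partial sums `W^a_n` of the random weights associated with the fitness sequence `a`: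
`W^a_1 = 1` and `W^a_n = ∏_{k=1}^{n-1} β_k⁻¹`. -/
def WA {Ω : Type*} (β : ℕ → Ω → ℝ) (n : ℕ) (ω : Ω) : ℝ :=
  if n = 0 then 0 else if n = 1 then 1 else ∏ k ∈ Finset.Icc 1 (n - 1), (β k ω)⁻¹

/-- The random weights `w^a_n = W^a_n - W^a_{n-1}` (with `w^a_1 = 1`). -/
def wA {Ω : Type*} (β : ℕ → Ω → ℝ) (n : ℕ) (ω : Ω) : ℝ := WA β n ω - WA β (n - 1) ω


/-! ### Auxiliary lemmas for the proof of Lemma 1.6 -/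

open scoped ENNReal NNReal

lemma sqrtPow (x : ℝ) (hx : 0 ≤ x) : ∀ n : ℕ, Real.sqrt (x ^ n) = Real.sqrt x ^ n := by
  intro n
  induction n with
  | zero => simp
  | succ m ih => rw [pow_succ, pow_succ, Real.sqrt_mul (pow_nonneg hx m), ih]

lemma geomIccEq : ∀ (m j₀ : ℕ), j₀ ≤ m + 1 →
    ∑ j ∈ Finset.Icc j₀ m, (1/2 : ℝ) ^ j = 2 * (1/2) ^ j₀ - 2 * (1/2) ^ (m+1) := by
  intro m
  induction m with
  | zero =>
    intro j₀ h
    interval_cases j₀ <;> norm_num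
  | succ m ih =>
    intro j₀ h
    rcases le_or_gt j₀ (m + 1) with h' | h'
    · rw [Finset.sum_Icc_succ_top h', ih j₀ h']
      ring
    · have : j₀ = m + 2 := by omega
      subst this
      rw [Finset.Icc_eq_empty (by omega)]
      simp

lemma geomIccSum (m j₀ : ℕ) : ∑ j ∈ Finset.Icc j₀ m, (1/2 : ℝ) ^ j ≤ 2 * (1/2) ^ j₀ := by
  rcases le_or_gt j₀ (m + 1) with h | h
  · rw [geomIccEq m j₀ h]
    have : (0:ℝ) ≤ 2 * (1/2) ^ (m+1) := by positivity
    linarith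
  · rw [Finset.Icc_eq_empty (by omega)]
    simp [pow_nonneg]

lemma realBeta (p q : ℝ) (hp : 0 < p) (hq : 0 < q) :
    ∫ x in Set.Ioo (0:ℝ) 1, x ^ (p - 1) * (1 - x) ^ (q - 1)
      = Real.Gamma p * Real.Gamma q / Real.Gamma (p + q) := by
  have key : Complex.betaIntegral p q
      = ((∫ x in (0:ℝ)..1, x ^ (p - 1) * (1 - x) ^ (q - 1) : ℝ) : ℂ) := by
    rw [Complex.betaIntegral, ← intervalIntegral.integral_ofReal]
    apply intervalIntegral.integral_congr
    intro x hx
    rw [Set.uIcc_of_le (by norm_num : (0:ℝ) ≤ 1)] at hx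
    obtain ⟨hx0, hx1⟩ := hx
    simp only []
    rw [show ((p:ℂ) - 1) = ((p - 1 : ℝ) : ℂ) by push_cast; ring,
      show ((q:ℂ) - 1) = ((q - 1 : ℝ) : ℂ) by push_cast; ring,
      show ((1:ℂ) - (x:ℝ)) = ((1 - x : ℝ) : ℂ) by push_cast; ring,
      ← Complex.ofReal_cpow hx0, ← Complex.ofReal_cpow (by linarith : (0:ℝ) ≤ 1 - x),
      ← Complex.ofReal_mul]
  have h := Complex.Gamma_mul_Gamma_eq_betaIntegral
    (s := (p:ℂ)) (t := (q:ℂ)) (by simpa using hp) (by simpa using hq)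
  rw [key] at h
  have hcast : ((p:ℂ) + (q:ℂ)) = ((p + q : ℝ) : ℂ) := by push_cast; ring
  rw [hcast, Complex.Gamma_ofReal, Complex.Gamma_ofReal, Complex.Gamma_ofReal] at h
  rw [← Complex.ofReal_mul, ← Complex.ofReal_mul] at h
  have h' : Real.Gamma p * Real.Gamma q
      = Real.Gamma (p + q) * ∫ x in (0:ℝ)..1, x ^ (p - 1) * (1 - x) ^ (q - 1) :=
    Complex.ofReal_inj.mp h
  have hΓ : 0 < Real.Gamma (p + q) := Real.Gamma_pos_of_pos (by linarith)
  rw [intervalIntegral.integral_of_le (by norm_num : (0:ℝ) ≤ 1),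
    ← MeasureTheory.integral_Ioc_eq_integral_Ioo] at *
  field_simp at h' ⊢
  linarith [h']

lemma gammaRatioProd (α b : ℝ) (hα : 0 < α) (hb : 0 < b) (j : ℕ) :
    Real.Gamma (α + b) / (Real.Gamma α * Real.Gamma b)
      * (Real.Gamma α * Real.Gamma (b + j) / Real.Gamma (α + b + j))
      = ∏ i ∈ Finset.range j, (b + i) / (α + b + i) := by
  induction j with
  | zero =>
    have h1 := Real.Gamma_pos_of_pos hα
    have h2 := Real.Gamma_pos_of_pos hb
    have h3 := Real.Gamma_pos_of_pos (by linarith : 0 < α + b)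
    simp only [Nat.cast_zero, add_zero, Finset.range_zero, Finset.prod_empty]
    field_simp
  | succ m ih =>
    have hbm : (0:ℝ) < b + m := by positivity
    have habm : (0:ℝ) < α + b + m := by positivity
    have e1 : Real.Gamma (b + (m+1 : ℕ)) = (b + m) * Real.Gamma (b + m) := by
      push_cast
      rw [show b + ((m:ℝ) + 1) = (b + m) + 1 by ring, Real.Gamma_add_one (ne_of_gt hbm)]
    have e2 : Real.Gamma (α + b + (m+1 : ℕ)) = (α + b + m) * Real.Gamma (α + b + m) := by
      push_cast
      rw [show α + b + ((m:ℝ) + 1) = (α + b + m) + 1 by ring,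
        Real.Gamma_add_one (ne_of_gt habm)]
    rw [Finset.prod_range_succ, ← ih, e1, e2]
    have h3 := Real.Gamma_pos_of_pos habm
    have h2 := Real.Gamma_pos_of_pos hbm
    field_simp

lemma betaMoment (α b : ℝ) (hα : 0 < α) (hb : 0 ≤ b) (j : ℕ) :
    ∫ x, (1 - x) ^ j ∂(betaMeasure α b)
      = ∏ i ∈ Finset.range j, (b + i) / (α + b + i) := by
  rcases eq_or_lt_of_le hb with hb0 | hbpos
  · have hb0' : b = 0 := hb0.symm
    subst hb0'
    rw [betaMeasure, if_pos rfl, integral_dirac]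
    rcases Nat.eq_zero_or_pos j with hj | hj
    · subst hj; simp
    · rw [Finset.prod_eq_zero (Finset.mem_range.mpr hj : 0 ∈ Finset.range j)]
      · simp [zero_pow (by omega : j ≠ 0)]
      · simp
  · have hbne : b ≠ 0 := ne_of_gt hbpos
    rw [betaMeasure, if_neg hbne]
    set c : ℝ := Real.Gamma (α + b) / (Real.Gamma α * Real.Gamma b) with hc
    have hcnn : 0 ≤ c := by
      have h1 := Real.Gamma_pos_of_pos hα
      have h2 := Real.Gamma_pos_of_pos hbpos
      have h3 := Real.Gamma_pos_of_pos (by linarith : 0 < α + b)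
      positivity
    have hdens : ∀ x : ℝ, ENNReal.ofReal (c * x ^ (α - 1) * (1 - x) ^ (b - 1))
        = ((fun x => (c * x ^ (α - 1) * (1 - x) ^ (b - 1)).toNNReal) x : ℝ≥0∞) := by
      intro x; rfl
    have hmeasd : Measurable fun x : ℝ => (c * x ^ (α - 1) * (1 - x) ^ (b - 1)).toNNReal := by
      apply Measurable.real_toNNReal
      fun_prop
    calc ∫ x, (1 - x) ^ j ∂((volume.restrict (Set.Ioo (0:ℝ) 1)).withDensity
          (fun x => ENNReal.ofReal (c * x ^ (α - 1) * (1 - x) ^ (b - 1))))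
        = ∫ x, ((c * x ^ (α - 1) * (1 - x) ^ (b - 1)).toNNReal : ℝ≥0)
            • ((1 - x) ^ j) ∂(volume.restrict (Set.Ioo (0:ℝ) 1)) := by
          simp_rw [hdens]
          exact integral_withDensity_eq_integral_smul hmeasd _
      _ = ∫ x in Set.Ioo (0:ℝ) 1, c * (x ^ (α - 1) * (1 - x) ^ ((b + j) - 1)) := by
          apply setIntegral_congr_fun (measurableSet_Ioo)
          intro x hx
          obtain ⟨hx0, hx1⟩ := hx
          have h1x : (0:ℝ) < 1 - x := by linarith
          have hnn : 0 ≤ c * x ^ (α - 1) * (1 - x) ^ (b - 1) := by positivity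
          show (c * x ^ (α - 1) * (1 - x) ^ (b - 1)).toNNReal • ((1 - x) ^ j)
              = c * (x ^ (α - 1) * (1 - x) ^ ((b + j) - 1))
          rw [NNReal.smul_def, Real.coe_toNNReal _ hnn, smul_eq_mul]
          rw [show ((1 - x) ^ j : ℝ) = (1 - x) ^ (j : ℝ) by
            rw [Real.rpow_natCast]]
          rw [show (c * x ^ (α - 1) * (1 - x) ^ (b - 1)) * (1-x) ^ (j:ℝ)
              = c * (x ^ (α - 1) * ((1 - x) ^ (b - 1) * (1-x) ^ (j:ℝ))) by ring]
          rw [← Real.rpow_add h1x]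
          ring_nf
      _ = c * ∫ x in Set.Ioo (0:ℝ) 1, x ^ (α - 1) * (1 - x) ^ ((b + j) - 1) :=
          integral_const_mul c _
      _ = ∏ i ∈ Finset.range j, (b + i) / (α + b + i) := by
          rw [realBeta α (b + j) hα (by positivity)]
          rw [show α + (b + j) = α + b + j by ring]
          exact gammaRatioProd α b hα hbpos j

lemma varAlgebra (b s k : ℝ) (hb : 0 ≤ b) (hk : 1 ≤ k) (hks : k ≤ s) (hbs : b ≤ s) :
    b*(b+1)*(b+2)*(b+3)/(s*(s+1)*(s+2)*(s+3)) - (b*(b+1)/(s*(s+1)))^2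
      ≤ 32*(b^3+b)/k^4 := by
  have hs : (1:ℝ) ≤ s := le_trans hk hks
  have hs0 : (0:ℝ) < s := by linarith
  have hk0 : (0:ℝ) < k := by linarith
  set u : ℝ := b*(b+1)/(s*(s+1)) with hu
  set v : ℝ := (b+2)*(b+3)/((s+2)*(s+3)) with hv
  have hmain : b*(b+1)*(b+2)*(b+3)/(s*(s+1)*(s+2)*(s+3)) - (b*(b+1)/(s*(s+1)))^2
      = u * (v - u) := by
    rw [hu, hv]
    field_simp
  rw [hmain]
  have hu0 : 0 ≤ u := by positivity
  have hRHS : (0:ℝ) ≤ 32*(b^3+b)/k^4 := by positivity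
  rcases le_or_gt v u with h | h
  · have : u * (v - u) ≤ 0 := mul_nonpos_of_nonneg_of_nonpos hu0 (by linarith)
    linarith
  · have hvu : v - u ≤ (4*b+12)/s^2 := by
      have hident : v - u = ((b+2)*(b+3)*(s*(s+1)) - b*(b+1)*((s+2)*(s+3)))
          / (s*(s+1)*(s+2)*(s+3)) := by
        rw [hu, hv]; field_simp
      rw [hident]
      rw [div_le_div_iff₀ (by positivity) (by positivity)]
      nlinarith [sq_nonneg s, sq_nonneg b, mul_pos hs0 hs0, sq_nonneg (s*b), sq_nonneg (s-1),
        mul_nonneg (mul_nonneg hb hb) hs0.le, mul_nonneg hb hs0.le,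
        mul_nonneg (mul_nonneg hb hb) (mul_nonneg hs0.le hs0.le)]
    have huu : u ≤ (b^2+b)/s^2 := by
      rw [hu, div_le_div_iff₀ (by positivity) (by positivity)]
      nlinarith [mul_nonneg hb hs0.le]
    have h1 : u * (v - u) ≤ ((b^2+b)/s^2) * ((4*b+12)/s^2) := by
      apply mul_le_mul huu hvu (by linarith) (by positivity)
    calc u * (v-u) ≤ ((b^2+b)/s^2) * ((4*b+12)/s^2) := h1
      _ = (b^2+b)*(4*b+12)/(s^2*s^2) := by rw [div_mul_div_comm]
      _ = (b^2+b)*(4*b+12)/s^4 := by norm_num [← pow_add]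
      _ ≤ (b^2+b)*(4*b+12)/k^4 := by
          apply div_le_div_of_nonneg_left (by nlinarith) (by positivity)
          · apply pow_le_pow_left₀ (by linarith) hks
      _ ≤ 32*(b^3+b)/k^4 := by
          apply div_le_div_of_nonneg_right ?_ (by positivity)
          nlinarith [sq_nonneg (b-1), mul_nonneg hb (sq_nonneg (b-1))]

lemma detEndgame (F : ℕ → ℝ) (hF0 : ∀ k, 0 ≤ F k) (D : ℝ) (hD : 1 ≤ D) (J : ℕ)
    (hTj : ∀ j, J ≤ j → ∑ k ∈ Finset.Icc (2^j) (2^(j+1)-1), F k ≤ D * (1/2)^j) :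
    ∃ C : ℝ, 0 ≤ C ∧ ∀ n : ℕ, 1 ≤ n →
      Summable (fun i : ℕ => F (n + i)) ∧ (∑' i : ℕ, F (n + i)) ≤ C / n := by
  set TF : ℕ → ℝ := fun j => ∑ k ∈ Finset.Icc (2^j) (2^(j+1)-1), F k with hTF
  have hTFnn : ∀ j, 0 ≤ TF j := fun j => Finset.sum_nonneg (fun k _ => hF0 k)
  set Bd : ℝ := (∑ j ∈ Finset.range J, TF j) + 2 * D with hBd
  have hBdnn : 0 ≤ Bd := by
    simp only [hBd]
    linarith [Finset.sum_nonneg (fun j (_ : j ∈ Finset.range J) => hTFnn j)]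
  have hcover : ∀ n m : ℕ, 1 ≤ n →
      ∑ k ∈ Finset.Ico n m, F k ≤ ∑ j ∈ Finset.Icc (Nat.log 2 n) m, TF j := by
    intro n m hn
    have hsub : Finset.Ico n m ⊆
        (Finset.Icc (Nat.log 2 n) m).biUnion (fun j => Finset.Icc (2^j) (2^(j+1)-1)) := by
      intro k hk
      rw [Finset.mem_Ico] at hk
      obtain ⟨hk1, hk2⟩ := hk
      have hkpos : k ≠ 0 := by omega
      rw [Finset.mem_biUnion]
      refine ⟨Nat.log 2 k, ?_, ?_⟩
      · rw [Finset.mem_Icc]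
        exact ⟨Nat.log_mono_right hk1, le_trans (Nat.log_le_self 2 k) (by omega)⟩
      · rw [Finset.mem_Icc]
        have h1 := Nat.pow_log_le_self 2 hkpos
        have h2 := Nat.lt_pow_succ_log_self (by norm_num : 1 < 2) k
        omega
    have hdisj : (↑(Finset.Icc (Nat.log 2 n) m) : Set ℕ).PairwiseDisjoint
        (fun j => Finset.Icc (2^j) (2^(j+1)-1)) := by
      intro i _ j _ hij
      apply Finset.disjoint_left.mpr
      intro k hki hkj
      rw [Finset.mem_Icc] at hki hkj
      have ei : (2:ℕ)^(i+1) = 2^i*2 := pow_succ 2 i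
      have ej : (2:ℕ)^(j+1) = 2^j*2 := pow_succ 2 j
      have hpi : 0 < (2:ℕ)^i := by positivity
      have hpj : 0 < (2:ℕ)^j := by positivity
      rcases lt_or_gt_of_ne hij with h | h
      · have hle : 2^(i+1) ≤ 2^j := Nat.pow_le_pow_right (by norm_num) (by omega)
        omega
      · have hle : 2^(j+1) ≤ 2^i := Nat.pow_le_pow_right (by norm_num) (by omega)
        omega
    calc ∑ k ∈ Finset.Ico n m, F k
        ≤ ∑ k ∈ (Finset.Icc (Nat.log 2 n) m).biUnion
            (fun j => Finset.Icc (2^j) (2^(j+1)-1)), F k :=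
          Finset.sum_le_sum_of_subset_of_nonneg hsub (fun k _ _ => hF0 k)
      _ = ∑ j ∈ Finset.Icc (Nat.log 2 n) m, TF j := Finset.sum_biUnion hdisj
  have hgen : ∀ j₀ m : ℕ, ∑ j ∈ Finset.Icc j₀ m, TF j ≤ Bd := by
    intro j₀ m
    rw [← Finset.sum_filter_add_sum_filter_not (Finset.Icc j₀ m) (· < J) TF]
    have h1 : ∑ j ∈ (Finset.Icc j₀ m).filter (· < J), TF j ≤ ∑ j ∈ Finset.range J, TF j := by
      apply Finset.sum_le_sum_of_subset_of_nonneg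
      · intro j hj
        simp only [Finset.mem_filter, Finset.mem_Icc, Finset.mem_range] at hj ⊢
        exact hj.2
      · exact fun j _ _ => hTFnn j
    have h2 : ∑ j ∈ (Finset.Icc j₀ m).filter (fun j => ¬ j < J), TF j ≤ 2 * D := by
      calc ∑ j ∈ (Finset.Icc j₀ m).filter (fun j => ¬ j < J), TF j
          ≤ ∑ j ∈ (Finset.Icc j₀ m).filter (fun j => ¬ j < J), D * (1/2)^j := by
            apply Finset.sum_le_sum
            intro j hj
            simp only [Finset.mem_filter] at hj
            exact hTj j (by omega)
        _ ≤ ∑ j ∈ Finset.Icc J m, D * (1/2)^j := by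
            apply Finset.sum_le_sum_of_subset_of_nonneg
            · intro j hj
              simp only [Finset.mem_filter, Finset.mem_Icc] at hj ⊢
              omega
            · intro j _ _; positivity
        _ = D * ∑ j ∈ Finset.Icc J m, (1/2:ℝ)^j := by rw [Finset.mul_sum]
        _ ≤ D * (2 * (1/2)^J) := by
            apply mul_le_mul_of_nonneg_left (geomIccSum m J) (by linarith)
        _ ≤ 2 * D := by
            have h3 : ((1:ℝ)/2)^J ≤ 1 := pow_le_one₀ (by norm_num) (by norm_num)
            nlinarith
    simp only [hBd]
    linarith
  have hA : ∀ n m : ℕ, 2^J ≤ n → ∑ k ∈ Finset.Ico n m, F k ≤ 4 * D / n := by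
    intro n m hn
    have hn1 : 1 ≤ n := le_trans (Nat.one_le_two_pow) hn
    have hJlog : J ≤ Nat.log 2 n := by
      rw [Nat.le_log_iff_pow_le (by norm_num) (by omega)]
      exact hn
    set j₀ := Nat.log 2 n with hj₀
    have step1 : ∑ j ∈ Finset.Icc j₀ m, TF j ≤ D * (2 * (1/2)^j₀) := by
      calc ∑ j ∈ Finset.Icc j₀ m, TF j ≤ ∑ j ∈ Finset.Icc j₀ m, D * (1/2)^j := by
            apply Finset.sum_le_sum
            intro j hj
            rw [Finset.mem_Icc] at hj
            exact hTj j (by omega)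
        _ = D * ∑ j ∈ Finset.Icc j₀ m, (1/2:ℝ)^j := by rw [Finset.mul_sum]
        _ ≤ D * (2 * (1/2)^j₀) := mul_le_mul_of_nonneg_left (geomIccSum m j₀) (by linarith)
    have hhalf : ((1:ℝ)/2)^j₀ ≤ 2 / n := by
      have hp : (0:ℝ) < 2^j₀ := by positivity
      have hn0 : (0:ℝ) < n := by exact_mod_cast Nat.pos_of_ne_zero (by omega)
      have h2 : (n:ℝ) < 2 * 2^j₀ := by
        have h2' := Nat.lt_pow_succ_log_self (by norm_num : 1 < 2) n
        have h2'' : (n:ℝ) < (2:ℝ)^(j₀+1) := by exact_mod_cast h2'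
        rw [pow_succ] at h2''
        linarith
      rw [show ((1:ℝ)/2)^j₀ = 1/2^j₀ by rw [div_pow]; norm_num,
        div_le_div_iff₀ hp hn0]
      linarith
    calc ∑ k ∈ Finset.Ico n m, F k ≤ ∑ j ∈ Finset.Icc j₀ m, TF j := hcover n m hn1
      _ ≤ D * (2 * (1/2)^j₀) := step1
      _ ≤ D * (2 * (2/n)) := by
          apply mul_le_mul_of_nonneg_left ?_ (by linarith)
          apply mul_le_mul_of_nonneg_left hhalf (by norm_num)
      _ = 4 * D / n := by ring
  set C : ℝ := 4 * D + (2^J : ℕ) * Bd with hC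
  have hCnn : 0 ≤ C := by
    have h1 : (0:ℝ) ≤ ((2^J : ℕ):ℝ) * Bd := mul_nonneg (by positivity) hBdnn
    simp only [hC]
    linarith
  refine ⟨C, hCnn, ?_⟩
  intro n hn
  have hn0 : (0:ℝ) < n := by exact_mod_cast hn
  have hrange : ∀ M : ℕ, ∑ i ∈ Finset.range M, F (n + i) = ∑ k ∈ Finset.Ico n (n+M), F k := by
    intro M
    rw [Finset.sum_Ico_eq_sum_range]
    simp
  have hQbound : ∀ M : ℕ, ∑ i ∈ Finset.range M, F (n + i) ≤ C / n := by
    intro M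
    rw [hrange M]
    rcases le_or_gt (2^J) n with hcase | hcase
    · calc ∑ k ∈ Finset.Ico n (n+M), F k ≤ 4 * D / n := hA n (n+M) hcase
        _ ≤ C / n := by
          have h1 : (0:ℝ) ≤ ((2^J : ℕ):ℝ) * Bd := mul_nonneg (by positivity) hBdnn
          gcongr
          simp only [hC]; linarith
    · calc ∑ k ∈ Finset.Ico n (n+M), F k
          ≤ ∑ j ∈ Finset.Icc (Nat.log 2 n) (n+M), TF j := hcover n (n+M) hn
        _ ≤ Bd := hgen _ _
        _ ≤ C / n := by
          rw [le_div_iff₀ hn0]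
          have hnle : (n:ℝ) ≤ ((2^J : ℕ):ℝ) := by
            exact_mod_cast (le_of_lt hcase)
          have h4D : (0:ℝ) ≤ 4 * D := by linarith
          simp only [hC]
          nlinarith
  constructor
  · exact summable_of_sum_range_le (fun i => hF0 _) hQbound
  · exact Real.tsum_le_of_sum_range_le (fun i => hF0 _) hQbound

lemma WAratio {Ω : Type*} (β : ℕ → Ω → ℝ) (ω : Ω) (hpos : ∀ k, 1 ≤ k → 0 < β k ω) :
    ∀ i, 2 ≤ i → wA β i ω / WA β i ω = 1 - β (i-1) ω := by
  have hW : ∀ m, 1 ≤ m → WA β m ω = ∏ k ∈ Finset.Icc 1 (m-1), (β k ω)⁻¹ := by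
    intro m hm
    rcases eq_or_lt_of_le hm with h | h
    · rw [WA, if_neg (by omega), if_pos h.symm]
      rw [show m - 1 = 0 by omega, Finset.Icc_eq_empty (by omega), Finset.prod_empty]
    · rw [WA, if_neg (by omega), if_neg (by omega)]
  have hWpos : ∀ m, 1 ≤ m → 0 < WA β m ω := by
    intro m hm
    rw [hW m hm]
    apply Finset.prod_pos
    intro k hk
    rw [Finset.mem_Icc] at hk
    exact inv_pos.mpr (hpos k hk.1)
  intro i hi
  obtain ⟨m, rfl⟩ : ∃ m, i = m + 1 := ⟨i - 1, by omega⟩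
  have hm1 : 1 ≤ m := by omega
  have hβm : 0 < β m ω := hpos m hm1
  have hstep : WA β (m+1) ω = WA β m ω * (β m ω)⁻¹ := by
    rw [hW (m+1) (by omega), hW m hm1]
    simp only [Nat.add_sub_cancel]
    have h3 : ∏ k ∈ Finset.Icc 1 m, (β k ω)⁻¹
        = (∏ k ∈ Finset.Icc 1 (m-1), (β k ω)⁻¹) * (β m ω)⁻¹ := by
      nth_rewrite 1 [show m = (m-1)+1 by omega]
      rw [Finset.prod_Icc_succ_top (by omega : 1 ≤ (m-1)+1)]
      rw [show (m-1)+1 = m by omega]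
    exact h3
  have hWm := hWpos m hm1
  have hwa : wA β (m+1) ω = WA β (m+1) ω - WA β m ω := by
    rw [wA, Nat.add_sub_cancel]
  rw [hwa, hstep, Nat.add_sub_cancel]
  field_simp

set_option maxHeartbeats 2000000 in
/-- **Lemma 1.6.** If `a` satisfies `(H₁^PAT)` and `(H₂^PAT)`, then almost surely
`∑_{i ≥ n} (w^a_i / W^a_i)² = O(1/n)`. -/
theorem pat_weights_H2
    (a : ℕ → ℝ) (ha : ∀ n, 1 ≤ n → 0 ≤ a n) (ζ : ℝ)
    (h1 : H1PAT a ζ) (h2 : H2PAT a)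
    {Ω : Type*} [MeasurableSpace Ω] (P : Measure Ω) [IsProbabilityMeasure P]
    (β : ℕ → Ω → ℝ) (hmeas : ∀ k, Measurable (β k))
    (hindep : iIndepFun β P)
    (hlaw : ∀ k : ℕ, 1 ≤ k →
      Measure.map (β k) P = betaMeasure (psum a k + k) (a (k + 1))) :
    ∀ᵐ ω ∂P, ∃ C : ℝ, ∀ n : ℕ, 1 ≤ n →
      Summable (fun i : ℕ => (wA β (n + i) ω / WA β (n + i) ω) ^ 2) ∧
      (∑' i : ℕ, (wA β (n + i) ω / WA β (n + i) ω) ^ 2) ≤ C / n := by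
  classical
  obtain ⟨C₂, hC₂pos, hC₂⟩ := h2
  set C₁ : ℝ := (1 + C₂)/2 with hC₁def
  have hC₁pos : 0 < C₁ := by rw [hC₁def]; linarith
  have hpsumnn : ∀ n : ℕ, 0 ≤ psum a n := by
    intro n
    apply Finset.sum_nonneg
    intro i hi
    exact ha i (Finset.mem_Icc.mp hi).1
  have hsuma : ∀ n : ℕ, 1 ≤ n → ∑ i ∈ Finset.Icc 1 n, a i ≤ C₁ * n := by
    intro n hn
    have h1 : ∑ i ∈ Finset.Icc 1 n, ((1:ℝ) + a i^2) = (n:ℝ) + ∑ i ∈ Finset.Icc 1 n, a i^2 := by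
      rw [Finset.sum_add_distrib, Finset.sum_const, Nat.card_Icc]
      simp
    calc ∑ i ∈ Finset.Icc 1 n, a i ≤ ∑ i ∈ Finset.Icc 1 n, ((1:ℝ) + a i^2)/2 := by
          apply Finset.sum_le_sum
          intro i _
          nlinarith [sq_nonneg (a i - 1)]
      _ = ((n:ℝ) + ∑ i ∈ Finset.Icc 1 n, a i^2)/2 := by rw [← Finset.sum_div, h1]
      _ ≤ ((n:ℝ) + C₂*n)/2 := by linarith [hC₂ n hn]
      _ = C₁ * n := by rw [hC₁def]; ring
  have hamax : ∀ m : ℕ, 1 ≤ m → a m ≤ Real.sqrt (C₂ * m) := by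
    intro m hm
    have h1 : a m^2 ≤ C₂ * m := by
      refine le_trans ?_ (hC₂ m hm)
      exact Finset.single_le_sum (f := fun i => a i^2) (fun i _ => sq_nonneg _)
        (Finset.mem_Icc.mpr ⟨hm, le_refl m⟩)
    exact (Real.le_sqrt (ha m hm) (by nlinarith [sq_nonneg (a m)])).mpr h1
  set ξ : ℕ → Ω → ℝ := fun k ω => (1 - β k ω)^2 with hξdef
  have hφmeas : Measurable (fun x : ℝ => (1 - x)^2) := by fun_prop
  have hξmeas : ∀ k, Measurable (ξ k) := fun k => hφmeas.comp (hmeas k)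
  -- a.e. range of β
  have hβIoc : ∀ k, 1 ≤ k → ∀ᵐ ω ∂P, β k ω ∈ Set.Ioc (0:ℝ) 1 := by
    intro k hk
    have hmap : ∀ᵐ x ∂(Measure.map (β k) P), x ∈ Set.Ioc (0:ℝ) 1 := by
      rw [hlaw k hk, betaMeasure]
      split_ifs with hb
      · rw [ae_iff]
        rw [show {x : ℝ | ¬ x ∈ Set.Ioc (0:ℝ) 1} = (Set.Ioc (0:ℝ) 1)ᶜ from rfl]
        rw [Measure.dirac_apply' _ measurableSet_Ioc.compl]
        simp
      · rw [ae_iff]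
        rw [show {x : ℝ | ¬ x ∈ Set.Ioc (0:ℝ) 1} = (Set.Ioc (0:ℝ) 1)ᶜ from rfl]
        rw [withDensity_apply _ measurableSet_Ioc.compl]
        rw [Measure.restrict_restrict measurableSet_Ioc.compl]
        have hcap : (Set.Ioc (0:ℝ) 1)ᶜ ∩ Set.Ioo (0:ℝ) 1 = ∅ := by
          apply Set.eq_empty_iff_forall_notMem.mpr
          intro x hx
          exact hx.1 ⟨hx.2.1, le_of_lt hx.2.2⟩
        rw [hcap, Measure.restrict_empty, lintegral_zero_measure]
    exact (MeasureTheory.ae_map_iff (hmeas k).aemeasurable measurableSet_Ioc).mp hmap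
  have hξLp : ∀ k, 1 ≤ k → MemLp (ξ k) 2 P := by
    intro k hk
    apply MemLp.of_bound (hξmeas k).aestronglyMeasurable 1
    filter_upwards [hβIoc k hk] with ω hω
    obtain ⟨h1, h2⟩ := hω
    show ‖(1 - β k ω)^2‖ ≤ 1
    rw [Real.norm_eq_abs, abs_of_nonneg (sq_nonneg _)]
    nlinarith
  have hξint : ∀ k, 1 ≤ k → Integrable (ξ k) P := fun k hk => (hξLp k hk).integrable one_le_two
  set bb : ℕ → ℝ := fun k => a (k+1) with hbbdef
  set ss : ℕ → ℝ := fun k => psum a k + k + a (k+1) with hssdef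
  have hbbnn : ∀ k, 0 ≤ bb k := fun k => ha (k+1) (by omega)
  have hssk : ∀ k : ℕ, (k:ℝ) ≤ ss k := by
    intro k
    simp only [hssdef]
    have := hpsumnn k
    have := ha (k+1) (by omega)
    linarith
  have hbss : ∀ k : ℕ, 1 ≤ k → bb k ≤ ss k := by
    intro k hk
    simp only [hbbdef, hssdef]
    have := hpsumnn k
    have h1 : (1:ℝ) ≤ (k:ℝ) := by exact_mod_cast hk
    linarith
  have hsspos : ∀ k : ℕ, 1 ≤ k → 0 < ss k := by
    intro k hk
    have h1 : (1:ℝ) ≤ (k:ℝ) := by exact_mod_cast hk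
    linarith [hssk k]
  -- moment formula
  have hmom : ∀ k, 1 ≤ k → ∀ j : ℕ, ∫ ω, (1 - β k ω)^j ∂P
      = ∏ i ∈ Finset.range j, (bb k + i)/(ss k + i) := by
    intro k hk j
    have hαpos : 0 < psum a k + (k:ℝ) := by
      have h1 := hpsumnn k
      have h2 : (1:ℝ) ≤ (k:ℝ) := by exact_mod_cast hk
      linarith
    have hg : Measurable (fun x : ℝ => (1 - x)^j) := by fun_prop
    calc ∫ ω, (1 - β k ω)^j ∂P
        = ∫ x, (1-x)^j ∂(Measure.map (β k) P) :=
          (integral_map (hmeas k).aemeasurable hg.aestronglyMeasurable).symm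
      _ = ∫ x, (1-x)^j ∂(betaMeasure (psum a k + k) (a (k+1))) := by rw [hlaw k hk]
      _ = ∏ i ∈ Finset.range j, (bb k + i)/(ss k + i) := by
          rw [betaMoment _ _ hαpos (ha (k+1) (by omega))]
  have hE2 : ∀ k, 1 ≤ k → P[ξ k] = bb k*(bb k+1)/(ss k*(ss k+1)) := by
    intro k hk
    have h1 := hmom k hk 2
    have hp : ∏ i ∈ Finset.range 2, (bb k + i)/(ss k + i)
        = bb k*(bb k+1)/(ss k*(ss k+1)) := by
      rw [Finset.prod_range_succ, Finset.prod_range_succ, Finset.prod_range_zero, one_mul,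
        div_mul_div_comm]
      norm_num
    exact h1.trans hp
  have hE4 : ∀ k, 1 ≤ k → P[(ξ k)^2]
      = bb k*(bb k+1)*(bb k+2)*(bb k+3)/(ss k*(ss k+1)*(ss k+2)*(ss k+3)) := by
    intro k hk
    have h0 : (ξ k)^2 = fun ω => (1 - β k ω)^4 := by
      funext ω
      simp only [Pi.pow_apply, hξdef]
      ring
    rw [h0, hmom k hk 4]
    have hs0 := hsspos k hk
    have hs1 : (0:ℝ) < ss k + 1 := by linarith
    have hs2 : (0:ℝ) < ss k + 2 := by linarith
    have hs3 : (0:ℝ) < ss k + 3 := by linarith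
    rw [Finset.prod_range_succ, Finset.prod_range_succ, Finset.prod_range_succ,
      Finset.prod_range_succ, Finset.prod_range_zero, one_mul]
    push_cast
    field_simp
    ring
  have hvar : ∀ k, 1 ≤ k → variance (ξ k) P ≤ 32*(bb k^3 + bb k)/(k:ℝ)^4 := by
    intro k hk
    have hk1 : (1:ℝ) ≤ (k:ℝ) := by exact_mod_cast hk
    rw [variance_eq_sub (hξLp k hk), hE4 k hk, hE2 k hk]
    exact varAlgebra (bb k) (ss k) k (hbbnn k) hk1 (hssk k) (hbss k hk)
  have hEle : ∀ k, 1 ≤ k → P[ξ k] ≤ (bb k^2 + bb k)/(k:ℝ)^2 := by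
    intro k hk
    have hk1 : (1:ℝ) ≤ (k:ℝ) := by exact_mod_cast hk
    have hs := hssk k
    rw [hE2 k hk, show bb k*(bb k+1) = bb k^2 + bb k by ring]
    apply div_le_div_of_nonneg_left (by nlinarith [hbbnn k]) (by positivity)
    nlinarith
  have hEnn : ∀ k, 0 ≤ P[ξ k] := by
    intro k
    apply integral_nonneg
    intro ω
    exact sq_nonneg _
  -- blocks
  set Bj : ℕ → Finset ℕ := fun j => Finset.Icc (2^j) (2^(j+1)-1) with hBjdef
  have hBjmem : ∀ j k, k ∈ Bj j → 1 ≤ k ∧ 2^j ≤ k ∧ k + 1 ≤ 2^(j+1) := by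
    intro j k hk
    simp only [hBjdef, Finset.mem_Icc] at hk
    have h1 : (1:ℕ) ≤ 2^j := Nat.one_le_two_pow
    have h2 : (1:ℕ) ≤ 2^(j+1) := Nat.one_le_two_pow
    omega
  set T : ℕ → Ω → ℝ := fun j => ∑ k ∈ Bj j, ξ k with hTdef
  have hTLp : ∀ j, MemLp (T j) 2 P := by
    intro j
    exact memLp_finset_sum' _ (fun k hk => hξLp k (hBjmem j k hk).1)
  have hET : ∀ j, P[T j] = ∑ k ∈ Bj j, P[ξ k] := by
    intro j
    have : T j = fun ω => ∑ k ∈ Bj j, ξ k ω := by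
      funext ω
      simp [hTdef, Finset.sum_apply]
    rw [this]
    exact integral_finset_sum _ (fun k hk => hξint k (hBjmem j k hk).1)
  -- block sums of shifted sequences
  have hblock : ∀ (g : ℕ → ℝ) (Cg : ℝ), (∀ i, 1 ≤ i → 0 ≤ g i) →
      (∀ n : ℕ, 1 ≤ n → ∑ i ∈ Finset.Icc 1 n, g i ≤ Cg * n) →
      ∀ j, ∑ k ∈ Bj j, g (k+1) ≤ Cg * (2:ℝ)^(j+1) := by
    intro g Cg hg0 hgsum j
    have h1 : ∑ k ∈ Bj j, g (k+1) = ∑ i ∈ Finset.Icc (2^j+1) (2^(j+1)-1+1), g i := by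
      simp only [hBjdef]
      rw [← Finset.map_add_right_Icc _ _ 1, Finset.sum_map]
      simp
    have h2 : Finset.Icc (2^j+1) (2^(j+1)-1+1) ⊆ Finset.Icc 1 (2^(j+1)) := by
      intro i hi
      simp only [Finset.mem_Icc] at hi ⊢
      have : (1:ℕ) ≤ 2^(j+1) := Nat.one_le_two_pow
      omega
    calc ∑ k ∈ Bj j, g (k+1) = ∑ i ∈ Finset.Icc (2^j+1) (2^(j+1)-1+1), g i := h1
      _ ≤ ∑ i ∈ Finset.Icc 1 (2^(j+1)), g i := by
          apply Finset.sum_le_sum_of_subset_of_nonneg h2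
          intro i hi _
          exact hg0 i (Finset.mem_Icc.mp hi).1
      _ ≤ Cg * ((2^(j+1) : ℕ) : ℝ) := hgsum _ Nat.one_le_two_pow
      _ = Cg * (2:ℝ)^(j+1) := by push_cast; ring
  -- expectation of block sums
  have hETle : ∀ j, P[T j] ≤ 2*(C₂+C₁)*(1/2:ℝ)^j := by
    intro j
    have hx : (0:ℝ) < (2:ℝ)^j := by positivity
    have hterm : ∀ k ∈ Bj j, P[ξ k] ≤ (bb k^2 + bb k) * (((2:ℝ)^j)^2)⁻¹ := by
      intro k hk
      obtain ⟨hk1, hk2, _⟩ := hBjmem j k hk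
      have hkR : (2:ℝ)^j ≤ (k:ℝ) := by exact_mod_cast hk2
      calc P[ξ k] ≤ (bb k^2 + bb k)/(k:ℝ)^2 := hEle k hk1
        _ ≤ (bb k^2 + bb k) * (((2:ℝ)^j)^2)⁻¹ := by
            rw [div_eq_mul_inv]
            apply mul_le_mul_of_nonneg_left ?_ (by nlinarith [hbbnn k, pow_nonneg (hbbnn k) 3, sq_nonneg (bb k)])
            apply inv_anti₀ (by positivity)
            nlinarith
    calc P[T j] = ∑ k ∈ Bj j, P[ξ k] := hET j
      _ ≤ ∑ k ∈ Bj j, (bb k^2 + bb k) * (((2:ℝ)^j)^2)⁻¹ := Finset.sum_le_sum hterm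
      _ = (∑ k ∈ Bj j, (bb k^2 + bb k)) * (((2:ℝ)^j)^2)⁻¹ := by rw [← Finset.sum_mul]
      _ ≤ ((C₂+C₁) * (2:ℝ)^(j+1)) * (((2:ℝ)^j)^2)⁻¹ := by
          apply mul_le_mul_of_nonneg_right ?_ (by positivity)
          have := hblock (fun i => a i^2 + a i) (C₂+C₁)
            (fun i hi => by show (0:ℝ) ≤ a i^2 + a i; nlinarith [sq_nonneg (a i), ha i hi])
            (fun n hn => by
              rw [Finset.sum_add_distrib, add_mul]
              exact add_le_add (hC₂ n hn) (hsuma n hn)) j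
          exact this
      _ = 2*(C₂+C₁)*(1/2:ℝ)^j := by
          rw [pow_succ]
          have h2 : ((1:ℝ)/2)^j = ((2:ℝ)^j)⁻¹ := by
            rw [div_pow, one_pow, one_div]
          rw [h2]
          field_simp
  -- variance of block sums
  set K : ℝ := 64*(Real.sqrt (2*C₂)*C₂ + C₁) with hKdef
  set r : ℝ := Real.sqrt 2 / 2 with hrdef
  have hsqrt2 : (1:ℝ) ≤ Real.sqrt 2 := by
    nlinarith [Real.sq_sqrt (by norm_num : (0:ℝ) ≤ 2), Real.sqrt_nonneg 2]
  have hsqrt2' : Real.sqrt 2 < 2 := by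
    nlinarith [Real.sq_sqrt (by norm_num : (0:ℝ) ≤ 2), Real.sqrt_nonneg 2]
  have hr0 : 0 ≤ r := by rw [hrdef]; positivity
  have hr1 : r < 1 := by rw [hrdef]; linarith
  have hK0 : 0 ≤ K := by
    rw [hKdef]
    have := Real.sqrt_nonneg (2*C₂)
    nlinarith
  have hkey : ∀ j, variance (T j) P / ((1/2:ℝ)^j)^2 ≤ K * r^j := by
    intro j
    set x : ℝ := (2:ℝ)^j with hxdef
    set y : ℝ := (Real.sqrt 2)^j with hydef
    have hx : (0:ℝ) < x := by rw [hxdef]; positivity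
    have hy0 : (0:ℝ) ≤ y := by rw [hydef]; positivity
    have hy1 : (1:ℝ) ≤ y := one_le_pow₀ hsqrt2
    have hyx : y^2 = x := by
      rw [hydef, hxdef, ← pow_mul, mul_comm j 2, pow_mul, Real.sq_sqrt (by norm_num : (0:ℝ) ≤ 2)]
    set s2 : ℝ := Real.sqrt (2*C₂) with hs2def
    have hs20 : 0 ≤ s2 := Real.sqrt_nonneg _
    -- variance bound
    have hvarT : variance (T j) P ≤ 32*(s2*y*(C₂*(2*x)) + C₁*(2*x))*(x^4)⁻¹ := by
      have hvs : variance (T j) P = ∑ k ∈ Bj j, variance (ξ k) P := by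
        rw [hTdef]
        apply ProbabilityTheory.IndepFun.variance_sum
          (fun k hk => hξLp k (hBjmem j k hk).1)
        intro k hk l hl hkl
        exact (hindep.indepFun hkl).comp hφmeas hφmeas
      have hterm : ∀ k ∈ Bj j, variance (ξ k) P ≤ 32*(bb k^3 + bb k)*(x^4)⁻¹ := by
        intro k hk
        obtain ⟨hk1, hk2, _⟩ := hBjmem j k hk
        have hkR : x ≤ (k:ℝ) := by rw [hxdef]; exact_mod_cast hk2
        calc variance (ξ k) P ≤ 32*(bb k^3 + bb k)/(k:ℝ)^4 := hvar k hk1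
          _ ≤ 32*(bb k^3 + bb k)*(x^4)⁻¹ := by
              rw [div_eq_mul_inv]
              apply mul_le_mul_of_nonneg_left ?_ (by nlinarith [hbbnn k, pow_nonneg (hbbnn k) 3, sq_nonneg (bb k)])
              apply inv_anti₀ (by positivity)
              apply pow_le_pow_left₀ hx.le hkR
      have hsum3 : ∑ k ∈ Bj j, (bb k^3 + bb k) ≤ s2*y*(C₂*(2*x)) + C₁*(2*x) := by
        have hbbu : ∀ k ∈ Bj j, bb k ≤ s2 * y := by
          intro k hk
          obtain ⟨hk1, _, hk3⟩ := hBjmem j k hk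
          calc bb k ≤ Real.sqrt (C₂ * ((k:ℝ)+1)) := by
                have h := hamax (k+1) (by omega)
                push_cast at h
                exact h
            _ ≤ Real.sqrt (C₂ * (2:ℝ)^(j+1)) := by
                apply Real.sqrt_le_sqrt
                apply mul_le_mul_of_nonneg_left ?_ hC₂pos.le
                exact_mod_cast hk3
            _ = s2 * y := by
                rw [hs2def, hydef, show C₂ * (2:ℝ)^(j+1) = (2*C₂) * 2^j by rw [pow_succ]; ring,
                  Real.sqrt_mul (by positivity), sqrtPow 2 (by norm_num)]
        have h3 : ∑ k ∈ Bj j, bb k^3 ≤ (s2*y) * ∑ k ∈ Bj j, bb k^2 := by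
          rw [Finset.mul_sum]
          apply Finset.sum_le_sum
          intro k hk
          have := hbbu k hk
          have := hbbnn k
          nlinarith [sq_nonneg (bb k)]
        have h4 : ∑ k ∈ Bj j, bb k^2 ≤ C₂ * (2:ℝ)^(j+1) :=
          hblock (fun i => a i^2) C₂ (fun i _ => sq_nonneg _) hC₂ j
        have h5 : ∑ k ∈ Bj j, bb k ≤ C₁ * (2:ℝ)^(j+1) :=
          hblock a C₁ ha hsuma j
        have h6 : (2:ℝ)^(j+1) = 2*x := by rw [hxdef, pow_succ]; ring
        rw [h6] at h4 h5
        have h7 : (s2*y) * ∑ k ∈ Bj j, bb k^2 ≤ (s2*y)*(C₂*(2*x)) := by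
          apply mul_le_mul_of_nonneg_left h4 (by positivity)
        rw [Finset.sum_add_distrib]
        have := le_trans h3 h7
        nlinarith
      calc variance (T j) P = ∑ k ∈ Bj j, variance (ξ k) P := hvs
        _ ≤ ∑ k ∈ Bj j, 32*(bb k^3 + bb k)*(x^4)⁻¹ := Finset.sum_le_sum hterm
        _ = 32 * (∑ k ∈ Bj j, (bb k^3 + bb k)) * (x^4)⁻¹ := by
            rw [Finset.mul_sum, ← Finset.sum_mul]
        _ ≤ 32*(s2*y*(C₂*(2*x)) + C₁*(2*x))*(x^4)⁻¹ := by
            apply mul_le_mul_of_nonneg_right ?_ (by positivity)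
            apply mul_le_mul_of_nonneg_left hsum3 (by norm_num)
    have hhalf : ((1:ℝ)/2)^j = x⁻¹ := by
      rw [hxdef, div_pow, one_pow, one_div]
    have hrj : r^j = y/x := by
      rw [hrdef, hxdef, hydef, div_pow]
    rw [hhalf, hrj]
    have hchain : variance (T j) P / (x⁻¹)^2
        ≤ (32*(s2*y*(C₂*(2*x)) + C₁*(2*x))*(x^4)⁻¹) / (x⁻¹)^2 := by
      apply div_le_div_of_nonneg_right hvarT (by positivity)
    refine le_trans hchain ?_
    have heq : (32*(s2*y*(C₂*(2*x)) + C₁*(2*x))*(x^4)⁻¹) / (x⁻¹)^2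
        = 64*(s2*C₂*y + C₁)/x := by
      field_simp
      ring
    rw [heq, hKdef, ← mul_div_assoc, div_le_div_iff₀ hx hx]
    have hgoal : 64*C₁*(y-1) ≥ 0 := by nlinarith
    nlinarith [mul_pos hx hx, hx.le, mul_nonneg (mul_nonneg (by linarith : (0:ℝ) ≤ 64*C₁) (by linarith : (0:ℝ) ≤ y - 1)) hx.le]
  -- Chebyshev and Borel-Cantelli
  set sEv : ℕ → Set Ω := fun j => {ω | (1/2:ℝ)^j ≤ |T j ω - P[T j]|} with hsEvdef
  have hcheb : ∀ j, P (sEv j) ≤ ENNReal.ofReal (K * r^j) := by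
    intro j
    refine le_trans (ProbabilityTheory.meas_ge_le_variance_div_sq (hTLp j) (by positivity)) ?_
    exact ENNReal.ofReal_le_ofReal (hkey j)
  have hgeo : Summable (fun j : ℕ => K * r^j) :=
    (summable_geometric_of_lt_one hr0 hr1).mul_left K
  have htsum : (∑' j, P (sEv j)) ≠ ⊤ := by
    apply ne_of_lt
    calc (∑' j, P (sEv j)) ≤ ∑' j, ENNReal.ofReal (K * r^j) := ENNReal.tsum_le_tsum hcheb
      _ = ENNReal.ofReal (∑' j, K * r^j) :=
          (ENNReal.ofReal_tsum_of_nonneg (fun j => by positivity) hgeo).symm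
      _ < ⊤ := ENNReal.ofReal_lt_top
  have hBC := MeasureTheory.ae_eventually_notMem htsum
  have hβall : ∀ᵐ ω ∂P, ∀ k : ℕ, β (k+1) ω ∈ Set.Ioc (0:ℝ) 1 :=
    ae_all_iff.mpr (fun k => hβIoc (k+1) (by omega))
  filter_upwards [hBC, hβall] with ω hωBC hωβ
  obtain ⟨J, hJ⟩ := Filter.eventually_atTop.mp hωBC
  set F : ℕ → ℝ := fun k => (1 - β k ω)^2 with hFdef
  set D : ℝ := 2*(C₂+C₁) + 1 with hDdef
  have hD1 : (1:ℝ) ≤ D := by rw [hDdef]; nlinarith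
  have hβk : ∀ k, 1 ≤ k → β k ω ∈ Set.Ioc (0:ℝ) 1 := by
    intro k hk
    have := hωβ (k-1)
    rwa [Nat.sub_add_cancel hk] at this
  have hTj : ∀ j, J ≤ j → ∑ k ∈ Finset.Icc (2^j) (2^(j+1)-1), F k ≤ D*(1/2:ℝ)^j := by
    intro j hj
    have h1 : ω ∉ sEv j := hJ j hj
    simp only [hsEvdef, Set.mem_setOf_eq, not_le] at h1
    have h2 : T j ω = ∑ k ∈ Finset.Icc (2^j) (2^(j+1)-1), F k := by
      simp only [hTdef, hBjdef, Finset.sum_apply]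
      rfl
    have h3 := hETle j
    have h4 := abs_lt.mp h1
    rw [← h2, hDdef]
    nlinarith [h4.2]
  obtain ⟨C0, hC0nn, hC0⟩ := detEndgame F (fun k => sq_nonneg _) D hD1 J hTj
  refine ⟨2*C0 + 1, ?_⟩
  intro n hn
  have hβpos : ∀ k, 1 ≤ k → 0 < β k ω := fun k hk => (hβk k hk).1
  have hratio := WAratio β ω hβpos
  rcases eq_or_lt_of_le hn with h1 | h2
  · -- n = 1
    have hn1 : n = 1 := h1.symm
    subst hn1
    obtain ⟨hs1, ht1⟩ := hC0 1 le_rfl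
    have hfun : ∀ i : ℕ, (wA β (1 + (i+1)) ω / WA β (1 + (i+1)) ω)^2 = F (1 + i) := by
      intro i
      rw [hratio (1+(i+1)) (by omega)]
      rw [show (1 + (i+1)) - 1 = 1 + i by omega]
    have hsummable : Summable (fun i : ℕ => (wA β (1 + i) ω / WA β (1 + i) ω)^2) := by
      rw [← summable_nat_add_iff 1]
      exact Summable.congr hs1 (fun i => (hfun i).symm)
    refine ⟨hsummable, ?_⟩
    rw [Summable.tsum_eq_zero_add hsummable]
    have h00 : (wA β (1+0) ω / WA β (1+0) ω)^2 = 1 := by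
      norm_num [wA, WA]
    have htail : (∑' i : ℕ, (wA β (1 + (i+1)) ω / WA β (1 + (i+1)) ω)^2)
        = ∑' i : ℕ, F (1 + i) := tsum_congr hfun
    rw [h00, htail]
    have := ht1
    push_cast at this ⊢
    linarith
  · -- 2 ≤ n
    have hn2 : 2 ≤ n := h2
    have hm1 : 1 ≤ n - 1 := by omega
    obtain ⟨hs1, ht1⟩ := hC0 (n-1) hm1
    have hfun : ∀ i : ℕ, (wA β (n+i) ω / WA β (n+i) ω)^2 = F ((n-1) + i) := by
      intro i
      rw [hratio (n+i) (by omega)]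
      rw [show n + i - 1 = (n-1) + i by omega]
    refine ⟨Summable.congr hs1 (fun i => (hfun i).symm), ?_⟩
    rw [tsum_congr hfun]
    have hcast : ((n-1:ℕ):ℝ) = (n:ℝ) - 1 := by
      push_cast [Nat.cast_sub hn]
      ring
    have hnR : (2:ℝ) ≤ (n:ℝ) := by exact_mod_cast hn2
    calc (∑' i : ℕ, F ((n-1) + i)) ≤ C0 / ((n-1:ℕ):ℝ) := ht1
      _ ≤ (2*C0+1)/(n:ℝ) := by
          rw [hcast, div_le_div_iff₀ (by linarith) (by linarith)]
          nlinarith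

end WRTHeight
end
end

section
/- (Many-to-one lemma.) For any n≥1 and any function F : ℕ^n → ℝ, E[ Σ_{i=1}^n (w_i/W_n) e^{θ ht(u_i)} F( ht(u_i(1)), ht(u_i(2)), …, ht(u_i(n)) ) ] = Z_n · E[ F(H_1,H_2,…,H_n) ], where H_k := Σ_{i=2}^k 1{U_i ≤ p_i} with (U_i)_{i≥2} i.i.d. uniform on (0,1). -/
noncomputable section
open scoped Classical
open MeasureTheory ProbabilityTheory Finset Filter

namespace WRTHeight

lemma parentFun_le (par : ℕ → ℕ) (n : ℕ) : parentFun par n ≤ n - 1 := by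
  unfold parentFun; split <;> omega

lemma parentFun_congr {par par' : ℕ → ℕ} (n : ℕ) (h : par n = par' n) :
    parentFun par n = parentFun par' n := by unfold parentFun; rw [h]

lemma htFun_congr {par par' : ℕ → ℕ} (m : ℕ)
    (h : ∀ i, 2 ≤ i → i ≤ m → par i = par' i) : htFun par m = htFun par' m := by
  induction m using Nat.strong_induction_on with
  | _ m ih =>
    rw [htFun]; conv_rhs => rw [htFun]
    split
    · rfl
    · rename_i hm
      have h2 : 2 ≤ m := by omega
      have hpc : parentFun par m = parentFun par' m := parentFun_congr m (h m h2 le_rfl)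
      have hlt : parentFun par m < m := parentFun_lt par (by omega)
      have hle : parentFun par m ≤ m - 1 := parentFun_le par m
      rw [← hpc, ih _ hlt (fun i hi1 hi2 => h i hi1 (by omega))]

lemma ancFun_congr {par par' : ℕ → ℕ} (k m : ℕ)
    (h : ∀ i, 2 ≤ i → i ≤ m → par i = par' i) : ancFun par k m = ancFun par' k m := by
  induction m using Nat.strong_induction_on with
  | _ m ih =>
    rw [ancFun]; conv_rhs => rw [ancFun]
    split
    · rfl
    · split
      · rfl
      · rename_i hm1 hm2
        have h2 : 2 ≤ m := by omega
        have hpc : parentFun par m = parentFun par' m := parentFun_congr m (h m h2 le_rfl)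
        have hlt : parentFun par m < m := parentFun_lt par (by omega)
        rw [← hpc]
        exact ih _ hlt (fun i hi1 hi2 => h i hi1 (by omega))

lemma ancFun_of_le (par : ℕ → ℕ) {k m : ℕ} (h : m ≤ k) : ancFun par k m = m := by
  rw [ancFun]; simp [h]

lemma htFun_le (par : ℕ → ℕ) (m : ℕ) : htFun par m ≤ m := by
  induction m using Nat.strong_induction_on with
  | _ m ih =>
    rw [htFun]
    split
    · omega
    · rename_i hm
      have hlt : parentFun par m < m := parentFun_lt par (by omega)
      have := ih _ hlt
      omega

lemma ancFun_le (par : ℕ → ℕ) (k m : ℕ) : ancFun par k m ≤ m := by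
  induction m using Nat.strong_induction_on with
  | _ m ih =>
    rw [ancFun]
    split
    · exact le_rfl
    · split
      · exact le_rfl
      · rename_i hm1 hm2
        have hlt : parentFun par m < m := parentFun_lt par (by omega)
        exact (ih _ hlt).trans hlt.le

lemma htFun_one (par : ℕ → ℕ) : htFun par 1 = 0 := by rw [htFun]; simp

lemma htFun_step (par : ℕ → ℕ) {n : ℕ} (h1 : 1 ≤ par (n + 1)) (h2 : par (n + 1) ≤ n)
    (hn : 1 ≤ n) : htFun par (n + 1) = htFun par (par (n + 1)) + 1 := by
  rw [htFun]
  have hp : parentFun par (n + 1) = par (n + 1) := by unfold parentFun; split <;> omega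
  rw [dif_neg (by omega), hp]

lemma ancFun_step (par : ℕ → ℕ) {n k : ℕ} (h1 : 1 ≤ par (n + 1)) (h2 : par (n + 1) ≤ n)
    (hn : 1 ≤ n) (hk : k ≤ n) : ancFun par k (n + 1) = ancFun par k (par (n + 1)) := by
  rw [ancFun]
  have hp : parentFun par (n + 1) = par (n + 1) := by unfold parentFun; split <;> omega
  rw [if_neg (by omega), dif_neg (by omega), hp]

/-! ### generic packing of finitely many coordinates -/

def pfill (S : Finset ℕ) (v : S → ℕ) : ℕ → ℕ := fun m => if h : m ∈ S then v ⟨m, h⟩ else 0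

def rfill (S : Finset ℕ) (v : S → ℝ) : ℕ → ℝ := fun m => if h : m ∈ S then v ⟨m, h⟩ else 0

lemma comp_repr_nat {Ω : Type*} (x : ℕ → Ω → ℕ) (S : Finset ℕ) {α : Type*}
    (g : (ℕ → ℕ) → α)
    (hg : ∀ f f' : ℕ → ℕ, (∀ i ∈ S, f i = f' i) → g f = g f') :
    (fun ω => g (fun m => x m ω))
      = (fun v : S → ℕ => g (pfill S v)) ∘ (fun ω (i : S) => x i ω) := by
  funext ω
  exact hg _ _ (fun i hi => by simp [pfill, dif_pos hi])

lemma comp_repr_real {Ω : Type*} (x : ℕ → Ω → ℝ) (S : Finset ℕ) {α : Type*}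
    (g : (ℕ → ℝ) → α)
    (hg : ∀ f f' : ℕ → ℝ, (∀ i ∈ S, f i = f' i) → g f = g f') :
    (fun ω => g (fun m => x m ω))
      = (fun v : S → ℝ => g (rfill S v)) ∘ (fun ω (i : S) => x i ω) := by
  funext ω
  exact hg _ _ (fun i hi => by simp [rfill, dif_pos hi])

lemma measurable_of_insensitive {Ω : Type*} [MeasurableSpace Ω] {x : ℕ → Ω → ℕ}
    (hx : ∀ i, Measurable (x i)) (S : Finset ℕ) {α : Type*} [MeasurableSpace α]
    (g : (ℕ → ℕ) → α)
    (hg : ∀ f f' : ℕ → ℕ, (∀ i ∈ S, f i = f' i) → g f = g f') :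
    Measurable (fun ω => g (fun m => x m ω)) := by
  rw [comp_repr_nat x S g hg]
  exact (measurable_of_countable _).comp (measurable_pi_lambda _ (fun i => hx i))

lemma measurable_htFun {Ω : Type*} [MeasurableSpace Ω] {x : ℕ → Ω → ℕ}
    (hx : ∀ i, Measurable (x i)) (i : ℕ) :
    Measurable (fun ω => htFun (fun m => x m ω) i) :=
  measurable_of_insensitive hx (Finset.Icc 2 i) _
    (fun f f' h => htFun_congr i (fun j h2 hj => h j (Finset.mem_Icc.mpr ⟨h2, hj⟩)))

lemma measurable_htAncFun {Ω : Type*} [MeasurableSpace Ω] {x : ℕ → Ω → ℕ}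
    (hx : ∀ i, Measurable (x i)) (l i : ℕ) :
    Measurable (fun ω => htFun (fun m => x m ω) (ancFun (fun m => x m ω) l i)) := by
  refine measurable_of_insensitive hx (Finset.Icc 2 i)
    (fun f => htFun f (ancFun f l i)) ?_
  intro f f' h
  have h' : ∀ j, 2 ≤ j → j ≤ i → f j = f' j := fun j h2 hj => h j (Finset.mem_Icc.mpr ⟨h2, hj⟩)
  show htFun f (ancFun f l i) = htFun f' (ancFun f' l i)
  rw [ancFun_congr l i h']
  exact htFun_congr _ (fun j h2 hj => h' j h2 (hj.trans (ancFun_le f' l i)))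

/-! ### boundedness helpers -/

lemma integrable_of_bound {Ω : Type*} [MeasurableSpace Ω] {P : Measure Ω} [IsFiniteMeasure P]
    {f : Ω → ℝ} (hf : Measurable f) (C : ℝ) (hC : ∀ ω, |f ω| ≤ C) : Integrable f P :=
  (integrable_const C).mono' hf.aestronglyMeasurable (Filter.Eventually.of_forall hC)

lemma exists_F_bound (n B : ℕ) (F : (Fin n → ℕ) → ℝ) :
    ∃ M : ℝ, 0 ≤ M ∧ ∀ v : Fin n → ℕ, (∀ k, v k ≤ B) → |F v| ≤ M := by
  classical
  set s : Finset (Fin n → ℕ) := Fintype.piFinset (fun _ => Finset.range (B + 1)) with hs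
  have hne : s.Nonempty := ⟨fun _ => 0, by simp [hs, Fintype.mem_piFinset]⟩
  refine ⟨s.sup' hne (fun v => |F v|), ?_, ?_⟩
  · obtain ⟨v, hv⟩ := hne
    exact le_trans (abs_nonneg (F v)) (Finset.le_sup' (fun v => |F v|) hv)
  · intro v hv
    refine Finset.le_sup' (fun v => |F v|) ?_
    simp only [hs, Fintype.mem_piFinset, Finset.mem_range]
    exact fun k => Nat.lt_succ_of_le (hv k)

lemma integral_ite_one {Ω : Type*} [MeasurableSpace Ω] (P : Measure Ω) [IsFiniteMeasure P]
    (p : Ω → Prop) [DecidablePred p] (hs : MeasurableSet {ω | p ω}) :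
    ∫ ω, (if p ω then (1 : ℝ) else 0) ∂P = (P {ω | p ω}).toReal := by
  have : (fun ω => if p ω then (1 : ℝ) else 0)
      = Set.indicator {ω | p ω} (fun _ => (1 : ℝ)) := by
    funext ω
    by_cases h : p ω <;> simp [Set.indicator_apply, h]
  rw [this, MeasureTheory.integral_indicator_const _ hs]
  simp
  rfl

/-! ### weight ratio facts -/

lemma psum_pos {w : ℕ → ℝ} (hw : GoodWeights w) {n : ℕ} (hn : 1 ≤ n) : 0 < psum w n := by
  unfold psum
  apply Finset.sum_pos' (fun i hi => hw.2 i (Finset.mem_Icc.mp hi).1)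
  exact ⟨1, Finset.mem_Icc.mpr ⟨le_rfl, hn⟩, hw.1⟩

lemma psum_succ (w : ℕ → ℝ) (n : ℕ) : psum w (n + 1) = psum w n + w (n + 1) := by
  unfold psum
  exact Finset.sum_Icc_succ_top (by omega) w

lemma ratio_nonneg {w : ℕ → ℝ} (hw : GoodWeights w) {i : ℕ} (hi : 1 ≤ i) :
    0 ≤ w i / psum w i :=
  div_nonneg (hw.2 i hi) (psum_pos hw hi).le

lemma ratio_lt_one {w : ℕ → ℝ} (hw : GoodWeights w) {i : ℕ} (hi : 2 ≤ i) :
    w i / psum w i < 1 := by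
  obtain ⟨j, rfl⟩ : ∃ j, i = j + 1 := ⟨i - 1, by omega⟩
  have h1 : 1 ≤ j := by omega
  have hpos : 0 < psum w (j + 1) := psum_pos hw (by omega)
  rw [div_lt_one hpos, psum_succ]
  linarith [psum_pos hw h1]

lemma pdenom_pos {w : ℕ → ℝ} (hw : GoodWeights w) {θ : ℝ} (hθ : 0 < θ) {i : ℕ} (hi : 1 ≤ i) :
    0 < 1 + (Real.exp θ - 1) * (w i / psum w i) := by
  have h1 : 1 < Real.exp θ := by
    rw [← Real.exp_zero]; exact Real.exp_lt_exp.mpr hθ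
  nlinarith [ratio_nonneg hw hi]

lemma pWeight_nonneg {w : ℕ → ℝ} (hw : GoodWeights w) {θ : ℝ} (hθ : 0 < θ) {i : ℕ}
    (hi : 1 ≤ i) : 0 ≤ pWeight w θ i := by
  unfold pWeight
  apply div_nonneg _ (pdenom_pos hw hθ hi).le
  exact mul_nonneg (Real.exp_nonneg θ) (ratio_nonneg hw hi)

lemma pWeight_lt_one {w : ℕ → ℝ} (hw : GoodWeights w) {θ : ℝ} (hθ : 0 < θ) {i : ℕ}
    (hi : 2 ≤ i) : pWeight w θ i < 1 := by
  unfold pWeight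
  rw [div_lt_one (pdenom_pos hw hθ (by omega))]
  have h2 := ratio_lt_one hw hi
  nlinarith [Real.exp_pos θ]

lemma ZFun_succ (w : ℕ → ℝ) (θ : ℝ) {n : ℕ} (hn : 1 ≤ n) :
    ZFun w θ (n + 1) = ZFun w θ n * (1 + (Real.exp θ - 1) * (w (n+1) / psum w (n+1))) := by
  unfold ZFun
  exact Finset.prod_Icc_succ_top (by omega) _
/-! ### probabilistic helpers -/

lemma par_measurableSet {Ω : Type*} [MeasurableSpace Ω] {par : ℕ → Ω → ℕ}
    (hm : ∀ i, Measurable (par i)) (i k : ℕ) : MeasurableSet {ω | par i ω = k} :=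
  (hm i) (measurableSet_singleton k)

lemma par_ae {Ω : Type*} [MeasurableSpace Ω] {P : Measure Ω} [IsProbabilityMeasure P]
    {w : ℕ → ℝ} {par : ℕ → Ω → ℕ} (hw : GoodWeights w) (hwrt : IsWRT P w par)
    {n : ℕ} (hn : 1 ≤ n) :
    ∀ᵐ ω ∂P, 1 ≤ par (n + 1) ω ∧ par (n + 1) ω ≤ n := by
  have hmeas : ∀ k : ℕ, MeasurableSet {ω | par (n + 1) ω = k} :=
    fun k => par_measurableSet hwrt.1 (n + 1) k
  have hWpos := psum_pos hw hn
  have hsum : ∑ k ∈ Finset.Icc 1 n, P {ω | par (n + 1) ω = k} = 1 := by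
    have h1 : ∀ k ∈ Finset.Icc 1 n, P {ω | par (n + 1) ω = k}
        = ENNReal.ofReal (w k / psum w n) := fun k hk =>
      hwrt.2.2 n hn k (Finset.mem_Icc.mp hk).1 (Finset.mem_Icc.mp hk).2
    rw [Finset.sum_congr rfl h1, ← ENNReal.ofReal_sum_of_nonneg
      (fun k _ => div_nonneg (hw.2 k (Finset.mem_Icc.mp ‹k ∈ Finset.Icc 1 n›).1) hWpos.le)]
    have : ∑ k ∈ Finset.Icc 1 n, w k / psum w n = 1 := by
      rw [← Finset.sum_div]
      exact div_self (ne_of_gt hWpos)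
    rw [this, ENNReal.ofReal_one]
  set S : Set Ω := ⋃ k ∈ Finset.Icc 1 n, {ω | par (n + 1) ω = k} with hS
  have hSmeas : MeasurableSet S := Finset.measurableSet_biUnion _ (fun k _ => hmeas k)
  have hPS : P S = 1 := by
    rw [hS, measure_biUnion_finset ?_ (fun k _ => hmeas k), hsum]
    intro a _ b _ hab
    simp only [Function.onFun, Set.disjoint_left]
    intro ω h1 h2
    exact hab (h1.symm.trans h2)
  rw [ae_iff]
  have hcompl : {ω | ¬(1 ≤ par (n + 1) ω ∧ par (n + 1) ω ≤ n)} = Sᶜ := by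
    rw [hS]; ext ω
    simp only [Set.mem_setOf_eq, Set.compl_iUnion, Set.mem_iInter, Set.mem_compl_iff,
      Finset.mem_Icc]
    constructor
    · intro h k hk hp; omega
    · intro h
      exact fun hc => h (par (n + 1) ω) hc rfl
  rw [hcompl, measure_compl hSmeas (measure_ne_top P S), hPS, measure_univ, tsub_self]

lemma unif_prob_le {Ω' : Type*} [MeasurableSpace Ω'] {P' : Measure Ω'} {U : ℕ → Ω' → ℝ}
    (hU : IsIIDUniform P' U) (i : ℕ) {p : ℝ} (h0 : 0 ≤ p) (h1 : p < 1) :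
    P' {ω' | U i ω' ≤ p} = ENNReal.ofReal p := by
  have h : {ω' | U i ω' ≤ p} = U i ⁻¹' Set.Iic p := rfl
  rw [h, ← Measure.map_apply (hU.1 i) measurableSet_Iic, hU.2.2 i]
  unfold unifMeasure
  rw [Measure.restrict_apply measurableSet_Iic]
  have h2 : Set.Iic p ∩ Set.Ioo 0 1 = Set.Ioc 0 p := by
    ext x
    simp only [Set.mem_inter_iff, Set.mem_Iic, Set.mem_Ioo, Set.mem_Ioc]
    constructor
    · rintro ⟨hxp, hx0, _⟩; exact ⟨hx0, hxp⟩
    · rintro ⟨hx0, hxp⟩; exact ⟨hxp, hx0, lt_of_le_of_lt hxp h1⟩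
  rw [h2, Real.volume_Ioc]
  norm_num

lemma integral_unif_ind {Ω' : Type*} [MeasurableSpace Ω'] {P' : Measure Ω'}
    [IsProbabilityMeasure P'] {U : ℕ → Ω' → ℝ} (hU : IsIIDUniform P' U) (i : ℕ) {p : ℝ}
    (h0 : 0 ≤ p) (h1 : p < 1) :
    ∫ ω', (if U i ω' ≤ p then (1 : ℝ) else 0) ∂P' = p := by
  have hs : MeasurableSet {ω' | U i ω' ≤ p} := (hU.1 i) measurableSet_Iic
  rw [integral_ite_one P' (fun ω' => U i ω' ≤ p) hs, unif_prob_le hU i h0 h1,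
    ENNReal.toReal_ofReal h0]

lemma integral_par_ind {Ω : Type*} [MeasurableSpace Ω] {P : Measure Ω}
    [IsProbabilityMeasure P] {w : ℕ → ℝ} {par : ℕ → Ω → ℕ} (hw : GoodWeights w)
    (hwrt : IsWRT P w par) {n k : ℕ} (hn : 1 ≤ n) (hk1 : 1 ≤ k) (hkn : k ≤ n) :
    ∫ ω, (if par (n + 1) ω = k then (1 : ℝ) else 0) ∂P = w k / psum w n := by
  rw [integral_ite_one P _ (par_measurableSet hwrt.1 (n + 1) k), hwrt.2.2 n hn k hk1 hkn,
    ENNReal.toReal_ofReal (div_nonneg (hw.2 k hk1) (psum_pos hw hn).le)]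
/-! ### extension maps -/

def extA (n : ℕ) (v : Fin n → ℕ) : Fin (n + 1) → ℕ :=
  fun k => if h : (k : ℕ) < n then v ⟨k, h⟩ else if h1 : n - 1 < n then v ⟨n - 1, h1⟩ else 0

def extB (n : ℕ) (v : Fin n → ℕ) : Fin (n + 1) → ℕ :=
  fun k => (if h : (k : ℕ) < n then v ⟨k, h⟩
    else if h1 : n - 1 < n then v ⟨n - 1, h1⟩ else 0) + (if (k : ℕ) < n then 0 else 1)

lemma extA_lt (n : ℕ) (v : Fin n → ℕ) (k : Fin (n + 1)) (h : (k : ℕ) < n) :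
    extA n v k = v ⟨k, h⟩ := by unfold extA; rw [dif_pos h]

lemma extB_lt (n : ℕ) (v : Fin n → ℕ) (k : Fin (n + 1)) (h : (k : ℕ) < n) :
    extB n v k = v ⟨k, h⟩ := by unfold extB; rw [dif_pos h, if_pos h, add_zero]

lemma extA_last (n : ℕ) (v : Fin n → ℕ) (k : Fin (n + 1)) (h : ¬((k : ℕ) < n))
    (h1 : n - 1 < n) : extA n v k = v ⟨n - 1, h1⟩ := by
  unfold extA; rw [dif_neg h, dif_pos h1]

lemma extB_last (n : ℕ) (v : Fin n → ℕ) (k : Fin (n + 1)) (h : ¬((k : ℕ) < n))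
    (h1 : n - 1 < n) : extB n v k = v ⟨n - 1, h1⟩ + 1 := by
  unfold extB; rw [dif_neg h, if_neg h, dif_pos h1]

lemma extA_bound (n B : ℕ) (v : Fin n → ℕ) (hv : ∀ k, v k ≤ B) : ∀ k, extA n v k ≤ B := by
  intro k; unfold extA
  split
  · exact hv _
  · split
    · exact hv _
    · omega

lemma extB_bound (n B : ℕ) (v : Fin n → ℕ) (hv : ∀ k, v k ≤ B) : ∀ k, extB n v k ≤ B + 1 := by
  intro k; unfold extB
  by_cases h : (k : ℕ) < n
  · rw [dif_pos h, if_pos h, add_zero]; exact (hv _).trans (Nat.le_succ B)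
  · rw [dif_neg h, if_neg h]
    by_cases h1 : n - 1 < n
    · rw [dif_pos h1]; exact Nat.add_le_add (hv _) le_rfl
    · rw [dif_neg h1]; omega
/-! ### the U-side one-step decomposition -/

lemma U_side (w : ℕ → ℝ) (θ : ℝ) (hw : GoodWeights w) (hθ : 0 < θ)
    {Ω' : Type*} [MeasurableSpace Ω'] (P' : Measure Ω') [IsProbabilityMeasure P']
    (U : ℕ → Ω' → ℝ) (hU : IsIIDUniform P' U) (n : ℕ) (hn : 1 ≤ n)
    (F : (Fin (n + 1) → ℕ) → ℝ) :
    ∫ ω', F (fun k : Fin (n + 1) => ∑ i ∈ Finset.Icc 2 ((k : ℕ) + 1),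
        if U i ω' ≤ pWeight w θ i then 1 else 0) ∂P'
    = pWeight w θ (n + 1) * (∫ ω', F (extB n (fun k : Fin n =>
          ∑ i ∈ Finset.Icc 2 ((k : ℕ) + 1), if U i ω' ≤ pWeight w θ i then 1 else 0)) ∂P')
      + (1 - pWeight w θ (n + 1)) * (∫ ω', F (extA n (fun k : Fin n =>
          ∑ i ∈ Finset.Icc 2 ((k : ℕ) + 1), if U i ω' ≤ pWeight w θ i then 1 else 0)) ∂P') := by
  classical
  have hp0 : 0 ≤ pWeight w θ (n + 1) := pWeight_nonneg hw hθ (by omega)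
  have hp1 : pWeight w θ (n + 1) < 1 := pWeight_lt_one hw hθ (by omega)
  have hn1 : n - 1 < n := by omega
  -- pointwise split
  have hsplit : ∀ ω', F (fun k : Fin (n + 1) => ∑ i ∈ Finset.Icc 2 ((k : ℕ) + 1),
        if U i ω' ≤ pWeight w θ i then 1 else 0)
      = (if U (n + 1) ω' ≤ pWeight w θ (n + 1) then (1:ℝ) else 0)
          * F (extB n (fun k : Fin n => ∑ i ∈ Finset.Icc 2 ((k : ℕ) + 1),
              if U i ω' ≤ pWeight w θ i then 1 else 0))
        + (if U (n + 1) ω' ≤ pWeight w θ (n + 1) then (0:ℝ) else 1)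
          * F (extA n (fun k : Fin n => ∑ i ∈ Finset.Icc 2 ((k : ℕ) + 1),
              if U i ω' ≤ pWeight w θ i then 1 else 0)) := by
    intro ω'
    by_cases hc : U (n + 1) ω' ≤ pWeight w θ (n + 1)
    · rw [if_pos hc, if_pos hc, one_mul, zero_mul, add_zero]
      congr 1
      funext k
      by_cases hk : (k : ℕ) < n
      · rw [extB_lt n _ k hk]
      · rw [extB_last n _ k hk hn1]
        have hkn : (k : ℕ) = n := by omega
        rw [hkn]
        have he : ((⟨n - 1, hn1⟩ : Fin n) : ℕ) + 1 = n := by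
          show n - 1 + 1 = n; omega
        rw [he, Finset.sum_Icc_succ_top (by omega : 2 ≤ n + 1), if_pos hc]
    · rw [if_neg hc, if_neg hc, one_mul, zero_mul, zero_add]
      congr 1
      funext k
      by_cases hk : (k : ℕ) < n
      · rw [extA_lt n _ k hk]
      · rw [extA_last n _ k hk hn1]
        have hkn : (k : ℕ) = n := by omega
        rw [hkn]
        have he : ((⟨n - 1, hn1⟩ : Fin n) : ℕ) + 1 = n := by
          show n - 1 + 1 = n; omega
        rw [he, Finset.sum_Icc_succ_top (by omega : 2 ≤ n + 1), if_neg hc, add_zero]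
  -- measurability
  have hHvm : ∀ k : Fin n, Measurable (fun ω' => ∑ i ∈ Finset.Icc 2 ((k : ℕ) + 1),
      if U i ω' ≤ pWeight w θ i then (1:ℕ) else 0) := by
    intro k
    apply Finset.measurable_sum
    intro i _
    exact Measurable.ite ((hU.1 i) measurableSet_Iic) measurable_const measurable_const
  have hY1m : Measurable (fun ω' => F (extA n (fun k : Fin n =>
      ∑ i ∈ Finset.Icc 2 ((k : ℕ) + 1), if U i ω' ≤ pWeight w θ i then 1 else 0))) :=
    (measurable_of_countable (fun v : Fin n → ℕ => F (extA n v))).comp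
      (measurable_pi_lambda _ hHvm)
  have hY2m : Measurable (fun ω' => F (extB n (fun k : Fin n =>
      ∑ i ∈ Finset.Icc 2 ((k : ℕ) + 1), if U i ω' ≤ pWeight w θ i then 1 else 0))) :=
    (measurable_of_countable (fun v : Fin n → ℕ => F (extB n v))).comp
      (measurable_pi_lambda _ hHvm)
  have hindm : Measurable (fun ω' => if U (n + 1) ω' ≤ pWeight w θ (n + 1) then (1:ℝ) else 0) :=
    Measurable.ite ((hU.1 (n + 1)) measurableSet_Iic) measurable_const measurable_const
  have hindm' : Measurable (fun ω' => if U (n + 1) ω' ≤ pWeight w θ (n + 1) then (0:ℝ) else 1) :=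
    Measurable.ite ((hU.1 (n + 1)) measurableSet_Iic) measurable_const measurable_const
  -- bounds
  obtain ⟨M, hM0, hMb⟩ := exists_F_bound (n + 1) (n + 1) F
  have hHvb : ∀ ω' (k : Fin n), (∑ i ∈ Finset.Icc 2 ((k : ℕ) + 1),
      if U i ω' ≤ pWeight w θ i then (1:ℕ) else 0) ≤ n := by
    intro ω' k
    calc (∑ i ∈ Finset.Icc 2 ((k : ℕ) + 1), if U i ω' ≤ pWeight w θ i then (1:ℕ) else 0)
        ≤ ∑ i ∈ Finset.Icc 2 ((k : ℕ) + 1), 1 :=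
          Finset.sum_le_sum (fun i _ => by split <;> omega)
      _ = (k : ℕ) + 1 + 1 - 2 := by rw [Finset.sum_const, smul_eq_mul, mul_one, Nat.card_Icc]
      _ ≤ n := by omega
  have hY1b : ∀ ω', |F (extA n (fun k : Fin n =>
      ∑ i ∈ Finset.Icc 2 ((k : ℕ) + 1), if U i ω' ≤ pWeight w θ i then 1 else 0))| ≤ M :=
    fun ω' => hMb _ (extA_bound n (n + 1) _ (fun k => (hHvb ω' k).trans (by omega)))
  have hY2b : ∀ ω', |F (extB n (fun k : Fin n =>
      ∑ i ∈ Finset.Icc 2 ((k : ℕ) + 1), if U i ω' ≤ pWeight w θ i then 1 else 0))| ≤ M :=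
    fun ω' => hMb _ (extB_bound n n _ (hHvb ω'))
  -- integrability
  have hi1 : Integrable (fun ω' => (if U (n + 1) ω' ≤ pWeight w θ (n + 1) then (1:ℝ) else 0)
      * F (extB n (fun k : Fin n => ∑ i ∈ Finset.Icc 2 ((k : ℕ) + 1),
          if U i ω' ≤ pWeight w θ i then 1 else 0))) P' := by
    apply integrable_of_bound (hindm.mul hY2m) M
    intro ω'
    simp only [Pi.mul_apply]
    rw [abs_mul]
    have h1 : |if U (n + 1) ω' ≤ pWeight w θ (n + 1) then (1:ℝ) else 0| ≤ 1 := by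
      split <;> simp
    calc _ ≤ 1 * M := mul_le_mul h1 (hY2b ω') (abs_nonneg _) zero_le_one
      _ = M := one_mul M
  have hi2 : Integrable (fun ω' => (if U (n + 1) ω' ≤ pWeight w θ (n + 1) then (0:ℝ) else 1)
      * F (extA n (fun k : Fin n => ∑ i ∈ Finset.Icc 2 ((k : ℕ) + 1),
          if U i ω' ≤ pWeight w θ i then 1 else 0))) P' := by
    apply integrable_of_bound (hindm'.mul hY1m) M
    intro ω'
    simp only [Pi.mul_apply]
    rw [abs_mul]
    have h1 : |if U (n + 1) ω' ≤ pWeight w θ (n + 1) then (0:ℝ) else 1| ≤ 1 := by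
      split <;> simp
    calc _ ≤ 1 * M := mul_le_mul h1 (hY1b ω') (abs_nonneg _) zero_le_one
      _ = M := one_mul M
  -- independence
  have hdisj : Disjoint ({n + 1} : Finset ℕ) (Finset.Icc 2 n) := by
    simp [Finset.disjoint_singleton_left]
  have hbase := hU.2.1.indepFun_finset {n + 1} (Finset.Icc 2 n) hdisj hU.1
  have hmemT : (n + 1) ∈ ({n + 1} : Finset ℕ) := Finset.mem_singleton_self _
  have hrfillm : ∀ i : ℕ,
      Measurable (fun v : (Finset.Icc 2 n : Finset ℕ) → ℝ => rfill (Finset.Icc 2 n) v i) := by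
    intro i
    unfold rfill
    split
    · exact measurable_pi_apply _
    · exact measurable_const
  have hGm : ∀ G : (Fin n → ℕ) → ℝ,
      Measurable (fun v : (Finset.Icc 2 n : Finset ℕ) → ℝ => G (fun k : Fin n =>
        ∑ i ∈ Finset.Icc 2 ((k : ℕ) + 1),
          if rfill (Finset.Icc 2 n) v i ≤ pWeight w θ i then 1 else 0)) := by
    intro G
    apply (measurable_of_countable G).comp
    apply measurable_pi_lambda
    intro k
    apply Finset.measurable_sum
    intro i _
    exact Measurable.ite (measurableSet_le (hrfillm i) measurable_const)
      measurable_const measurable_const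
  -- representation of the Y's through the tuple over Icc 2 n
  have hinsens : ∀ G : (Fin n → ℕ) → ℝ, ∀ u u' : ℕ → ℝ,
      (∀ i ∈ Finset.Icc 2 n, u i = u' i) →
      G (fun k : Fin n => ∑ i ∈ Finset.Icc 2 ((k : ℕ) + 1),
          if u i ≤ pWeight w θ i then 1 else 0)
      = G (fun k : Fin n => ∑ i ∈ Finset.Icc 2 ((k : ℕ) + 1),
          if u' i ≤ pWeight w θ i then 1 else 0) := by
    intro G u u' h
    congr 1
    funext k
    refine Finset.sum_congr rfl (fun i hi => ?_)
    rw [h i]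
    rw [Finset.mem_Icc] at hi ⊢
    exact ⟨hi.1, hi.2.trans (by omega : (k : ℕ) + 1 ≤ n)⟩
  have hrepr1 := comp_repr_real U (Finset.Icc 2 n)
      (fun u : ℕ → ℝ => F (extA n (fun k : Fin n => ∑ i ∈ Finset.Icc 2 ((k : ℕ) + 1),
          if u i ≤ pWeight w θ i then 1 else 0)))
      (fun u u' h => hinsens (fun v => F (extA n v)) u u' h)
  have hrepr2 := comp_repr_real U (Finset.Icc 2 n)
      (fun u : ℕ → ℝ => F (extB n (fun k : Fin n => ∑ i ∈ Finset.Icc 2 ((k : ℕ) + 1),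
          if u i ≤ pWeight w θ i then 1 else 0)))
      (fun u u' h => hinsens (fun v => F (extB n v)) u u' h)
  have hφ2m : Measurable (fun v : (({n + 1} : Finset ℕ) : Finset ℕ) → ℝ =>
      if v ⟨n + 1, hmemT⟩ ≤ pWeight w θ (n + 1) then (1:ℝ) else 0) :=
    Measurable.ite (measurableSet_le (measurable_pi_apply _) measurable_const)
      measurable_const measurable_const
  have hφ1m : Measurable (fun v : (({n + 1} : Finset ℕ) : Finset ℕ) → ℝ =>
      if v ⟨n + 1, hmemT⟩ ≤ pWeight w θ (n + 1) then (0:ℝ) else 1) :=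
    Measurable.ite (measurableSet_le (measurable_pi_apply _) measurable_const)
      measurable_const measurable_const
  have hIndep2 : IndepFun
      (fun ω' => if U (n + 1) ω' ≤ pWeight w θ (n + 1) then (1:ℝ) else 0)
      (fun ω' => F (extB n (fun k : Fin n => ∑ i ∈ Finset.Icc 2 ((k : ℕ) + 1),
          if U i ω' ≤ pWeight w θ i then 1 else 0))) P' := by
    have := hbase.comp hφ2m (hGm (fun v => F (extB n v)))
    rw [show (fun ω' => F (extB n (fun k : Fin n => ∑ i ∈ Finset.Icc 2 ((k : ℕ) + 1),
        if U i ω' ≤ pWeight w θ i then 1 else 0)))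
      = (fun v : (Finset.Icc 2 n : Finset ℕ) → ℝ =>
          F (extB n (fun k : Fin n => ∑ i ∈ Finset.Icc 2 ((k : ℕ) + 1),
            if rfill (Finset.Icc 2 n) v i ≤ pWeight w θ i then 1 else 0)))
        ∘ (fun ω' (i : (Finset.Icc 2 n : Finset ℕ)) => U i ω') from hrepr2]
    exact this
  have hIndep1 : IndepFun
      (fun ω' => if U (n + 1) ω' ≤ pWeight w θ (n + 1) then (0:ℝ) else 1)
      (fun ω' => F (extA n (fun k : Fin n => ∑ i ∈ Finset.Icc 2 ((k : ℕ) + 1),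
          if U i ω' ≤ pWeight w θ i then 1 else 0))) P' := by
    have := hbase.comp hφ1m (hGm (fun v => F (extA n v)))
    rw [show (fun ω' => F (extA n (fun k : Fin n => ∑ i ∈ Finset.Icc 2 ((k : ℕ) + 1),
        if U i ω' ≤ pWeight w θ i then 1 else 0)))
      = (fun v : (Finset.Icc 2 n : Finset ℕ) → ℝ =>
          F (extA n (fun k : Fin n => ∑ i ∈ Finset.Icc 2 ((k : ℕ) + 1),
            if rfill (Finset.Icc 2 n) v i ≤ pWeight w θ i then 1 else 0)))
        ∘ (fun ω' (i : (Finset.Icc 2 n : Finset ℕ)) => U i ω') from hrepr1]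
    exact this
  -- integrals of indicators
  have hInd : ∫ ω', (if U (n + 1) ω' ≤ pWeight w θ (n + 1) then (1:ℝ) else 0) ∂P'
      = pWeight w θ (n + 1) := integral_unif_ind hU (n + 1) hp0 hp1
  have hInd' : ∫ ω', (if U (n + 1) ω' ≤ pWeight w θ (n + 1) then (0:ℝ) else 1) ∂P'
      = 1 - pWeight w θ (n + 1) := by
    have heq : (fun ω' => if U (n + 1) ω' ≤ pWeight w θ (n + 1) then (0:ℝ) else 1)
        = (fun ω' => 1 - if U (n + 1) ω' ≤ pWeight w θ (n + 1) then (1:ℝ) else 0) := by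
      funext ω'; split <;> norm_num
    rw [heq, integral_sub (integrable_const 1)
      (integrable_of_bound hindm 1 (fun ω' => by split <;> simp)), hInd]
    simp
  -- conclusion
  calc ∫ ω', F (fun k : Fin (n + 1) => ∑ i ∈ Finset.Icc 2 ((k : ℕ) + 1),
        if U i ω' ≤ pWeight w θ i then 1 else 0) ∂P'
      = ∫ ω', ((if U (n + 1) ω' ≤ pWeight w θ (n + 1) then (1:ℝ) else 0)
          * F (extB n (fun k : Fin n => ∑ i ∈ Finset.Icc 2 ((k : ℕ) + 1),
              if U i ω' ≤ pWeight w θ i then 1 else 0))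
        + (if U (n + 1) ω' ≤ pWeight w θ (n + 1) then (0:ℝ) else 1)
          * F (extA n (fun k : Fin n => ∑ i ∈ Finset.Icc 2 ((k : ℕ) + 1),
              if U i ω' ≤ pWeight w θ i then 1 else 0))) ∂P' :=
        integral_congr_ae (Filter.Eventually.of_forall hsplit)
    _ = (∫ ω', (if U (n + 1) ω' ≤ pWeight w θ (n + 1) then (1:ℝ) else 0)
          * F (extB n (fun k : Fin n => ∑ i ∈ Finset.Icc 2 ((k : ℕ) + 1),
              if U i ω' ≤ pWeight w θ i then 1 else 0)) ∂P')
        + ∫ ω', (if U (n + 1) ω' ≤ pWeight w θ (n + 1) then (0:ℝ) else 1)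
          * F (extA n (fun k : Fin n => ∑ i ∈ Finset.Icc 2 ((k : ℕ) + 1),
              if U i ω' ≤ pWeight w θ i then 1 else 0)) ∂P' := integral_add hi1 hi2
    _ = pWeight w θ (n + 1) * (∫ ω', F (extB n (fun k : Fin n =>
          ∑ i ∈ Finset.Icc 2 ((k : ℕ) + 1), if U i ω' ≤ pWeight w θ i then 1 else 0)) ∂P')
      + (1 - pWeight w θ (n + 1)) * (∫ ω', F (extA n (fun k : Fin n =>
          ∑ i ∈ Finset.Icc 2 ((k : ℕ) + 1), if U i ω' ≤ pWeight w θ i then 1 else 0)) ∂P') := by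
        have h2 : (∫ ω', (if U (n + 1) ω' ≤ pWeight w θ (n + 1) then (1:ℝ) else 0)
              * F (extB n (fun k : Fin n => ∑ i ∈ Finset.Icc 2 ((k : ℕ) + 1),
                  if U i ω' ≤ pWeight w θ i then 1 else 0)) ∂P')
            = (∫ ω', (if U (n + 1) ω' ≤ pWeight w θ (n + 1) then (1:ℝ) else 0) ∂P')
              * ∫ ω', F (extB n (fun k : Fin n => ∑ i ∈ Finset.Icc 2 ((k : ℕ) + 1),
                  if U i ω' ≤ pWeight w θ i then 1 else 0)) ∂P' :=
          ProbabilityTheory.IndepFun.integral_mul_eq_mul_integral hIndep2 hindm.aestronglyMeasurable hY2m.aestronglyMeasurable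
        have h1 : (∫ ω', (if U (n + 1) ω' ≤ pWeight w θ (n + 1) then (0:ℝ) else 1)
              * F (extA n (fun k : Fin n => ∑ i ∈ Finset.Icc 2 ((k : ℕ) + 1),
                  if U i ω' ≤ pWeight w θ i then 1 else 0)) ∂P')
            = (∫ ω', (if U (n + 1) ω' ≤ pWeight w θ (n + 1) then (0:ℝ) else 1) ∂P')
              * ∫ ω', F (extA n (fun k : Fin n => ∑ i ∈ Finset.Icc 2 ((k : ℕ) + 1),
                  if U i ω' ≤ pWeight w θ i then 1 else 0)) ∂P' :=
          ProbabilityTheory.IndepFun.integral_mul_eq_mul_integral hIndep1 hindm'.aestronglyMeasurable hY1m.aestronglyMeasurable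
        rw [h2, h1, hInd, hInd']
/-! ### the P-side one-step decomposition -/

lemma P_side (w : ℕ → ℝ) (θ : ℝ) (hw : GoodWeights w) (hθ : 0 < θ)
    {Ω : Type*} [MeasurableSpace Ω] (P : Measure Ω) [IsProbabilityMeasure P]
    (par : ℕ → Ω → ℕ) (hwrt : IsWRT P w par) (n : ℕ) (hn : 1 ≤ n)
    (F : (Fin (n + 1) → ℕ) → ℝ) :
    ∫ ω, (∑ j ∈ Finset.Icc 1 (n + 1),
        (w j / psum w (n + 1)) * Real.exp (θ * htFun (fun m => par m ω) j)
          * F (fun k => htFun (fun m => par m ω)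
              (ancFun (fun m => par m ω) ((k : ℕ) + 1) j))) ∂P
    = (psum w n / psum w (n + 1)) * (∫ ω, (∑ j ∈ Finset.Icc 1 n,
        (w j / psum w n) * Real.exp (θ * htFun (fun m => par m ω) j)
          * F (extA n (fun k => htFun (fun m => par m ω)
              (ancFun (fun m => par m ω) ((k : ℕ) + 1) j)))) ∂P)
      + (w (n + 1) * Real.exp θ / psum w (n + 1)) * (∫ ω, (∑ j ∈ Finset.Icc 1 n,
        (w j / psum w n) * Real.exp (θ * htFun (fun m => par m ω) j)
          * F (extB n (fun k => htFun (fun m => par m ω)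
              (ancFun (fun m => par m ω) ((k : ℕ) + 1) j)))) ∂P) := by
  classical
  have hn1lt : n - 1 < n := by omega
  have hW0 : 0 < psum w n := psum_pos hw hn
  have hW1 : 0 < psum w (n + 1) := psum_pos hw (by omega)
  have hW0ne : psum w n ≠ 0 := ne_of_gt hW0
  have hW1ne : psum w (n + 1) ≠ 0 := ne_of_gt hW1
  have hm := hwrt.1
  -- vector identity for vertices j ≤ n
  have hvecA : ∀ (g : ℕ → ℕ) (j : ℕ), j ≤ n →
      (fun k : Fin (n + 1) => htFun g (ancFun g ((k : ℕ) + 1) j))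
        = extA n (fun k : Fin n => htFun g (ancFun g ((k : ℕ) + 1) j)) := by
    intro g j hj
    funext k
    by_cases hk : (k : ℕ) < n
    · rw [extA_lt n _ k hk]
    · rw [extA_last n _ k hk hn1lt]
      have hkn : (k : ℕ) = n := by omega
      rw [hkn]
      have h2 : ((⟨n - 1, hn1lt⟩ : Fin n) : ℕ) + 1 = n := by show n - 1 + 1 = n; omega
      rw [h2, ancFun_of_le g (by omega : j ≤ n + 1), ancFun_of_le g hj]
  -- measurability toolkit
  have hcast : Measurable (fun j : ℕ => (j : ℝ)) := measurable_of_countable _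
  have hhtm : ∀ i : ℕ, Measurable (fun ω => htFun (fun m => par m ω) i) :=
    fun i => measurable_htFun hm i
  have hexpm : ∀ i : ℕ,
      Measurable (fun ω => Real.exp (θ * htFun (fun m => par m ω) i)) := fun i =>
    Real.measurable_exp.comp (measurable_const.mul (hcast.comp (hhtm i)))
  have hFAm : ∀ j : ℕ, Measurable (fun ω => F (extA n (fun k : Fin n =>
      htFun (fun m => par m ω) (ancFun (fun m => par m ω) ((k : ℕ) + 1) j)))) := fun j =>
    (measurable_of_countable (fun v : Fin n → ℕ => F (extA n v))).comp
      (measurable_pi_lambda _ (fun k => measurable_htAncFun hm _ j))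
  have hFBm : ∀ j : ℕ, Measurable (fun ω => F (extB n (fun k : Fin n =>
      htFun (fun m => par m ω) (ancFun (fun m => par m ω) ((k : ℕ) + 1) j)))) := fun j =>
    (measurable_of_countable (fun v : Fin n → ℕ => F (extB n v))).comp
      (measurable_pi_lambda _ (fun k => measurable_htAncFun hm _ j))
  -- bounds
  obtain ⟨M, hM0, hMb⟩ := exists_F_bound (n + 1) (n + 1) F
  have hexpb : ∀ ω (i : ℕ), i ≤ n + 1 →
      Real.exp (θ * htFun (fun m => par m ω) i) ≤ Real.exp (θ * (n + 1)) := by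
    intro ω i hi
    apply Real.exp_le_exp.mpr
    apply mul_le_mul_of_nonneg_left _ hθ.le
    exact_mod_cast (htFun_le _ i).trans hi
  have hexp0 : ∀ ω (i : ℕ), (0:ℝ) ≤ Real.exp (θ * htFun (fun m => par m ω) i) :=
    fun ω i => (Real.exp_pos _).le
  have hFAb : ∀ ω (j : ℕ), j ≤ n → |F (extA n (fun k : Fin n =>
      htFun (fun m => par m ω) (ancFun (fun m => par m ω) ((k : ℕ) + 1) j)))| ≤ M := by
    intro ω j hj
    apply hMb
    apply extA_bound
    intro k
    exact le_trans (htFun_le _ _) (le_trans (ancFun_le _ _ _) (by omega))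
  have hFBb : ∀ ω (j : ℕ), j ≤ n → |F (extB n (fun k : Fin n =>
      htFun (fun m => par m ω) (ancFun (fun m => par m ω) ((k : ℕ) + 1) j)))| ≤ M := by
    intro ω j hj
    apply hMb
    apply extB_bound
    intro k
    exact le_trans (htFun_le _ _) (le_trans (ancFun_le _ _ _) hj)
  -- integrability of the two sums
  have htermAint : ∀ j ∈ Finset.Icc 1 n, Integrable (fun ω =>
      (w j / psum w n) * Real.exp (θ * htFun (fun m => par m ω) j)
        * F (extA n (fun k => htFun (fun m => par m ω)
            (ancFun (fun m => par m ω) ((k : ℕ) + 1) j)))) P := by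
    intro j hj
    rw [Finset.mem_Icc] at hj
    apply integrable_of_bound (((measurable_const.mul (hexpm j)).mul (hFAm j)))
      ((w j / psum w n) * Real.exp (θ * (n + 1)) * M)
    intro ω
    simp only [Pi.mul_apply]
    rw [abs_mul, abs_mul, abs_of_nonneg (div_nonneg (hw.2 j hj.1) hW0.le),
      abs_of_nonneg (hexp0 ω j)]
    apply mul_le_mul _ (hFAb ω j hj.2) (abs_nonneg _)
    · exact mul_nonneg (div_nonneg (hw.2 j hj.1) hW0.le) (Real.exp_pos _).le
    · exact mul_le_mul_of_nonneg_left (hexpb ω j (by omega))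
        (div_nonneg (hw.2 j hj.1) hW0.le)
  have htermBint : ∀ j ∈ Finset.Icc 1 n, Integrable (fun ω =>
      (w j / psum w n) * Real.exp (θ * htFun (fun m => par m ω) j)
        * F (extB n (fun k => htFun (fun m => par m ω)
            (ancFun (fun m => par m ω) ((k : ℕ) + 1) j)))) P := by
    intro j hj
    rw [Finset.mem_Icc] at hj
    apply integrable_of_bound (((measurable_const.mul (hexpm j)).mul (hFBm j)))
      ((w j / psum w n) * Real.exp (θ * (n + 1)) * M)
    intro ω
    simp only [Pi.mul_apply]
    rw [abs_mul, abs_mul, abs_of_nonneg (div_nonneg (hw.2 j hj.1) hW0.le),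
      abs_of_nonneg (hexp0 ω j)]
    apply mul_le_mul _ (hFBb ω j hj.2) (abs_nonneg _)
    · exact mul_nonneg (div_nonneg (hw.2 j hj.1) hW0.le) (Real.exp_pos _).le
    · exact mul_le_mul_of_nonneg_left (hexpb ω j (by omega))
        (div_nonneg (hw.2 j hj.1) hW0.le)
  have hsumAint : Integrable (fun ω => ∑ j ∈ Finset.Icc 1 n,
      (w j / psum w n) * Real.exp (θ * htFun (fun m => par m ω) j)
        * F (extA n (fun k => htFun (fun m => par m ω)
            (ancFun (fun m => par m ω) ((k : ℕ) + 1) j)))) P :=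
    MeasureTheory.integrable_finset_sum _ htermAint
  -- the special vertex n+1 term
  have hCm : Measurable (fun ω =>
      (w (n + 1) / psum w (n + 1)) * Real.exp (θ * htFun (fun m => par m ω) (n + 1))
        * F (fun k : Fin (n + 1) => htFun (fun m => par m ω)
            (ancFun (fun m => par m ω) ((k : ℕ) + 1) (n + 1)))) := by
    apply (measurable_const.mul (hexpm (n + 1))).mul
    exact (measurable_of_countable F).comp
      (measurable_pi_lambda _ (fun k => measurable_htAncFun hm _ (n + 1)))
  have hCb : ∀ ω, |(w (n + 1) / psum w (n + 1))
        * Real.exp (θ * htFun (fun m => par m ω) (n + 1))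
        * F (fun k : Fin (n + 1) => htFun (fun m => par m ω)
            (ancFun (fun m => par m ω) ((k : ℕ) + 1) (n + 1)))|
      ≤ (w (n + 1) / psum w (n + 1)) * Real.exp (θ * (n + 1)) * M := by
    intro ω
    have hwn : 0 ≤ w (n + 1) / psum w (n + 1) := div_nonneg (hw.2 _ (by omega)) hW1.le
    rw [abs_mul, abs_mul, abs_of_nonneg hwn, abs_of_nonneg (hexp0 ω (n + 1))]
    apply mul_le_mul _ _ (abs_nonneg _) (mul_nonneg hwn (Real.exp_pos _).le)
    · exact mul_le_mul_of_nonneg_left (hexpb ω (n + 1) le_rfl) hwn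
    · apply hMb
      intro k
      exact le_trans (htFun_le _ _) (ancFun_le _ _ _)
  have hCint : Integrable (fun ω =>
      (w (n + 1) / psum w (n + 1)) * Real.exp (θ * htFun (fun m => par m ω) (n + 1))
        * F (fun k : Fin (n + 1) => htFun (fun m => par m ω)
            (ancFun (fun m => par m ω) ((k : ℕ) + 1) (n + 1)))) P :=
    integrable_of_bound hCm _ hCb
  -- step 1: split the sum pointwise
  have hsplitP : ∀ ω, (∑ j ∈ Finset.Icc 1 (n + 1),
        (w j / psum w (n + 1)) * Real.exp (θ * htFun (fun m => par m ω) j)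
          * F (fun k => htFun (fun m => par m ω)
              (ancFun (fun m => par m ω) ((k : ℕ) + 1) j)))
      = (psum w n / psum w (n + 1)) * (∑ j ∈ Finset.Icc 1 n,
          (w j / psum w n) * Real.exp (θ * htFun (fun m => par m ω) j)
            * F (extA n (fun k => htFun (fun m => par m ω)
                (ancFun (fun m => par m ω) ((k : ℕ) + 1) j))))
        + (w (n + 1) / psum w (n + 1)) * Real.exp (θ * htFun (fun m => par m ω) (n + 1))
            * F (fun k : Fin (n + 1) => htFun (fun m => par m ω)
                (ancFun (fun m => par m ω) ((k : ℕ) + 1) (n + 1))) := by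
    intro ω
    rw [Finset.sum_Icc_succ_top (by omega : 1 ≤ n + 1)]
    congr 1
    rw [Finset.mul_sum]
    apply Finset.sum_congr rfl
    intro j hj
    rw [Finset.mem_Icc] at hj
    rw [hvecA (fun m => par m ω) j hj.2]
    field_simp
  rw [integral_congr_ae (Filter.Eventually.of_forall hsplitP), integral_add
    ((hsumAint.const_mul _)) hCint, MeasureTheory.integral_const_mul _ _]
  congr 1
  -- step 2: compute the integral of the (n+1)-vertex term via conditioning
  have hae := par_ae hw hwrt hn
  -- pointwise identity on the good event
  have hCD : ∀ ω, (1 ≤ par (n + 1) ω ∧ par (n + 1) ω ≤ n) →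
      (w (n + 1) / psum w (n + 1)) * Real.exp (θ * htFun (fun m => par m ω) (n + 1))
        * F (fun k : Fin (n + 1) => htFun (fun m => par m ω)
            (ancFun (fun m => par m ω) ((k : ℕ) + 1) (n + 1)))
      = ∑ j ∈ Finset.Icc 1 n, (if par (n + 1) ω = j then (1:ℝ) else 0)
          * ((w (n + 1) / psum w (n + 1)) * Real.exp θ
            * (Real.exp (θ * htFun (fun m => par m ω) j)
              * F (extB n (fun k : Fin n => htFun (fun m => par m ω)
                  (ancFun (fun m => par m ω) ((k : ℕ) + 1) j))))) := by
    intro ω ⟨h1, h2⟩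
    rw [Finset.sum_eq_single_of_mem (par (n + 1) ω) (Finset.mem_Icc.mpr ⟨h1, h2⟩)
      (fun b _ hb => by rw [if_neg (fun h => hb h.symm)]; exact zero_mul _)]
    rw [if_pos rfl, one_mul]
    have hht : htFun (fun m => par m ω) (n + 1)
        = htFun (fun m => par m ω) (par (n + 1) ω) + 1 :=
      htFun_step (fun m => par m ω) h1 h2 hn
    have hvec : (fun k : Fin (n + 1) => htFun (fun m => par m ω)
          (ancFun (fun m => par m ω) ((k : ℕ) + 1) (n + 1)))
        = extB n (fun k : Fin n => htFun (fun m => par m ω)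
            (ancFun (fun m => par m ω) ((k : ℕ) + 1) (par (n + 1) ω))) := by
      funext k
      by_cases hk : (k : ℕ) < n
      · rw [extB_lt n _ k hk]
        rw [ancFun_step (fun m => par m ω) h1 h2 hn (by omega : (k : ℕ) + 1 ≤ n)]
      · rw [extB_last n _ k hk hn1lt]
        have hkn : (k : ℕ) = n := by omega
        rw [hkn, ancFun_of_le _ (le_rfl : n + 1 ≤ n + 1), hht]
        have h3 : ((⟨n - 1, hn1lt⟩ : Fin n) : ℕ) + 1 = n := by show n - 1 + 1 = n; omega
        rw [h3, ancFun_of_le _ h2]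
    rw [hvec, hht]
    have hexpeq : Real.exp (θ * ((htFun (fun m => par m ω) (par (n + 1) ω) + 1 : ℕ) : ℝ))
        = Real.exp (θ * htFun (fun m => par m ω) (par (n + 1) ω)) * Real.exp θ := by
      rw [← Real.exp_add]
      congr 1
      push_cast
      ring
    rw [hexpeq]
    ring
  have hDm : ∀ j : ℕ, Measurable (fun ω => (if par (n + 1) ω = j then (1:ℝ) else 0)
      * ((w (n + 1) / psum w (n + 1)) * Real.exp θ
        * (Real.exp (θ * htFun (fun m => par m ω) j)
          * F (extB n (fun k : Fin n => htFun (fun m => par m ω)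
              (ancFun (fun m => par m ω) ((k : ℕ) + 1) j)))))) := by
    intro j
    exact (Measurable.ite (par_measurableSet hm (n + 1) j) measurable_const
      measurable_const).mul (measurable_const.mul ((hexpm j).mul (hFBm j)))
  have hDb : ∀ j : ℕ, 1 ≤ j → j ≤ n → ∀ ω,
      |(if par (n + 1) ω = j then (1:ℝ) else 0)
        * ((w (n + 1) / psum w (n + 1)) * Real.exp θ
          * (Real.exp (θ * htFun (fun m => par m ω) j)
            * F (extB n (fun k : Fin n => htFun (fun m => par m ω)
                (ancFun (fun m => par m ω) ((k : ℕ) + 1) j)))))|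
      ≤ (w (n + 1) / psum w (n + 1)) * Real.exp θ * (Real.exp (θ * (n + 1)) * M) := by
    intro j hj1 hj2 ω
    have hwn : 0 ≤ (w (n + 1) / psum w (n + 1)) * Real.exp θ :=
      mul_nonneg (div_nonneg (hw.2 _ (by omega)) hW1.le) (Real.exp_pos _).le
    rw [abs_mul]
    have h1 : |if par (n + 1) ω = j then (1:ℝ) else 0| ≤ 1 := by split <;> simp
    have h2 : |(w (n + 1) / psum w (n + 1)) * Real.exp θ
          * (Real.exp (θ * htFun (fun m => par m ω) j)
            * F (extB n (fun k : Fin n => htFun (fun m => par m ω)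
                (ancFun (fun m => par m ω) ((k : ℕ) + 1) j))))|
        ≤ (w (n + 1) / psum w (n + 1)) * Real.exp θ * (Real.exp (θ * (n + 1)) * M) := by
      rw [abs_mul, abs_of_nonneg hwn, abs_mul, abs_of_nonneg (hexp0 ω j)]
      exact mul_le_mul_of_nonneg_left (mul_le_mul (hexpb ω j (by omega)) (hFBb ω j hj2)
        (abs_nonneg _) (Real.exp_pos _).le) hwn
    calc _ ≤ 1 * ((w (n + 1) / psum w (n + 1)) * Real.exp θ
          * (Real.exp (θ * (n + 1)) * M)) :=
          mul_le_mul h1 h2 (abs_nonneg _) zero_le_one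
      _ = _ := one_mul _
  have hDint : ∀ j ∈ Finset.Icc 1 n, Integrable (fun ω =>
      (if par (n + 1) ω = j then (1:ℝ) else 0)
      * ((w (n + 1) / psum w (n + 1)) * Real.exp θ
        * (Real.exp (θ * htFun (fun m => par m ω) j)
          * F (extB n (fun k : Fin n => htFun (fun m => par m ω)
              (ancFun (fun m => par m ω) ((k : ℕ) + 1) j)))))) P := by
    intro j hj
    rw [Finset.mem_Icc] at hj
    exact integrable_of_bound (hDm j) _ (hDb j hj.1 hj.2)
  -- independence of the indicator and the j-th summand
  have hdisj : Disjoint ({n + 1} : Finset ℕ) (Finset.Icc 2 n) := by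
    simp [Finset.disjoint_singleton_left]
  have hbase := hwrt.2.1.indepFun_finset {n + 1} (Finset.Icc 2 n) hdisj hm
  have hmemT : (n + 1) ∈ ({n + 1} : Finset ℕ) := Finset.mem_singleton_self _
  have hIndep : ∀ j : ℕ, 1 ≤ j → j ≤ n → IndepFun
      (fun ω => if par (n + 1) ω = j then (1:ℝ) else 0)
      (fun ω => Real.exp (θ * htFun (fun m => par m ω) j)
        * F (extB n (fun k : Fin n => htFun (fun m => par m ω)
            (ancFun (fun m => par m ω) ((k : ℕ) + 1) j)))) P := by
    intro j hj1 hj2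
    have hrepr := comp_repr_nat par (Finset.Icc 2 n)
      (fun f : ℕ → ℕ => Real.exp (θ * htFun f j)
        * F (extB n (fun k : Fin n => htFun f (ancFun f ((k : ℕ) + 1) j))))
      (by
        intro f f' h
        have h' : ∀ i, 2 ≤ i → i ≤ j → f i = f' i := fun i hi2 hij =>
          h i (Finset.mem_Icc.mpr ⟨hi2, hij.trans hj2⟩)
        show Real.exp (θ * htFun f j)
            * F (extB n (fun k : Fin n => htFun f (ancFun f ((k : ℕ) + 1) j)))
          = Real.exp (θ * htFun f' j)
            * F (extB n (fun k : Fin n => htFun f' (ancFun f' ((k : ℕ) + 1) j)))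
        have hv : (fun k : Fin n => htFun f (ancFun f ((k : ℕ) + 1) j))
            = (fun k : Fin n => htFun f' (ancFun f' ((k : ℕ) + 1) j)) := by
          funext k
          rw [ancFun_congr ((k : ℕ) + 1) j h']
          exact htFun_congr _ (fun i hi2 hil => h' i hi2 (hil.trans (ancFun_le f' _ j)))
        rw [htFun_congr j h', hv])
    have hindrep : (fun ω => if par (n + 1) ω = j then (1:ℝ) else 0)
        = (fun v : (({n + 1} : Finset ℕ) : Finset ℕ) → ℕ =>
            if v ⟨n + 1, hmemT⟩ = j then (1:ℝ) else 0)
          ∘ (fun ω (i : (({n + 1} : Finset ℕ) : Finset ℕ)) => par i ω) := rfl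
    rw [hindrep, hrepr]
    exact hbase.comp (measurable_of_countable _) (measurable_of_countable _)
  -- put the C-term integral together
  have hstep : (∫ ω, (w (n + 1) / psum w (n + 1))
        * Real.exp (θ * htFun (fun m => par m ω) (n + 1))
        * F (fun k : Fin (n + 1) => htFun (fun m => par m ω)
            (ancFun (fun m => par m ω) ((k : ℕ) + 1) (n + 1))) ∂P)
      = ∑ j ∈ Finset.Icc 1 n, ((w j / psum w n)
          * ((w (n + 1) / psum w (n + 1)) * Real.exp θ
            * ∫ ω, Real.exp (θ * htFun (fun m => par m ω) j)
              * F (extB n (fun k : Fin n => htFun (fun m => par m ω)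
                  (ancFun (fun m => par m ω) ((k : ℕ) + 1) j))) ∂P)) := by
    rw [integral_congr_ae (hae.mono hCD), integral_finset_sum _ hDint]
    apply Finset.sum_congr rfl
    intro j hj
    rw [Finset.mem_Icc] at hj
    have hmul := ProbabilityTheory.IndepFun.integral_mul_eq_mul_integral (hIndep j hj.1 hj.2)
      (Measurable.ite (par_measurableSet hm (n + 1) j) measurable_const
        measurable_const).aestronglyMeasurable
      ((hexpm j).mul (hFBm j)).aestronglyMeasurable
    have heq : (∫ ω, (if par (n + 1) ω = j then (1:ℝ) else 0)
          * ((w (n + 1) / psum w (n + 1)) * Real.exp θ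
            * (Real.exp (θ * htFun (fun m => par m ω) j)
              * F (extB n (fun k : Fin n => htFun (fun m => par m ω)
                  (ancFun (fun m => par m ω) ((k : ℕ) + 1) j))))) ∂P)
        = ((w (n + 1) / psum w (n + 1)) * Real.exp θ)
          * ∫ ω, (if par (n + 1) ω = j then (1:ℝ) else 0)
            * (Real.exp (θ * htFun (fun m => par m ω) j)
              * F (extB n (fun k : Fin n => htFun (fun m => par m ω)
                  (ancFun (fun m => par m ω) ((k : ℕ) + 1) j)))) ∂P := by
      rw [← MeasureTheory.integral_const_mul _ _]
      apply integral_congr_ae (Filter.Eventually.of_forall _)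
      intro ω
      ring
    rw [heq]
    have hmul' : (∫ ω, (if par (n + 1) ω = j then (1:ℝ) else 0)
          * (Real.exp (θ * htFun (fun m => par m ω) j)
            * F (extB n (fun k : Fin n => htFun (fun m => par m ω)
                (ancFun (fun m => par m ω) ((k : ℕ) + 1) j)))) ∂P)
        = (∫ ω, (if par (n + 1) ω = j then (1:ℝ) else 0) ∂P)
          * ∫ ω, Real.exp (θ * htFun (fun m => par m ω) j)
            * F (extB n (fun k : Fin n => htFun (fun m => par m ω)
                (ancFun (fun m => par m ω) ((k : ℕ) + 1) j))) ∂P := hmul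
    rw [hmul', integral_par_ind hw hwrt hn hj.1 hj.2]
    ring
  rw [hstep]
  -- finally rearrange the sum into the desired form
  have hBint2 : ∀ j ∈ Finset.Icc 1 n, Integrable (fun ω =>
      (w j / psum w n) * (Real.exp (θ * htFun (fun m => par m ω) j)
        * F (extB n (fun k : Fin n => htFun (fun m => par m ω)
            (ancFun (fun m => par m ω) ((k : ℕ) + 1) j))))) P := by
    intro j hj
    have := htermBint j hj
    apply this.congr
    apply Filter.Eventually.of_forall
    intro ω
    ring
  calc ∑ j ∈ Finset.Icc 1 n, ((w j / psum w n)
        * ((w (n + 1) / psum w (n + 1)) * Real.exp θ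
          * ∫ ω, Real.exp (θ * htFun (fun m => par m ω) j)
            * F (extB n (fun k : Fin n => htFun (fun m => par m ω)
                (ancFun (fun m => par m ω) ((k : ℕ) + 1) j))) ∂P))
      = (w (n + 1) * Real.exp θ / psum w (n + 1))
        * ∑ j ∈ Finset.Icc 1 n, ((w j / psum w n)
          * ∫ ω, Real.exp (θ * htFun (fun m => par m ω) j)
            * F (extB n (fun k : Fin n => htFun (fun m => par m ω)
                (ancFun (fun m => par m ω) ((k : ℕ) + 1) j))) ∂P) := by
        rw [Finset.mul_sum]
        apply Finset.sum_congr rfl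
        intro j _
        ring
    _ = (w (n + 1) * Real.exp θ / psum w (n + 1)) * (∫ ω, (∑ j ∈ Finset.Icc 1 n,
        (w j / psum w n) * Real.exp (θ * htFun (fun m => par m ω) j)
          * F (extB n (fun k => htFun (fun m => par m ω)
              (ancFun (fun m => par m ω) ((k : ℕ) + 1) j)))) ∂P) := by
        have h1 : ∀ j ∈ Finset.Icc 1 n, (w j / psum w n)
              * (∫ ω, Real.exp (θ * htFun (fun m => par m ω) j)
                * F (extB n (fun k : Fin n => htFun (fun m => par m ω)
                    (ancFun (fun m => par m ω) ((k : ℕ) + 1) j))) ∂P)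
            = ∫ ω, (w j / psum w n) * (Real.exp (θ * htFun (fun m => par m ω) j)
                * F (extB n (fun k : Fin n => htFun (fun m => par m ω)
                    (ancFun (fun m => par m ω) ((k : ℕ) + 1) j))) ) ∂P :=
          fun j _ => (MeasureTheory.integral_const_mul _ _).symm
        congr 1
        rw [Finset.sum_congr rfl h1, ← integral_finset_sum _ hBint2]
        apply integral_congr_ae (Filter.Eventually.of_forall _)
        intro ω
        exact Finset.sum_congr rfl (fun j _ => (mul_assoc _ _ _).symm)
lemma final_alg (Zn Z1 p c1 c2 IA IB : ℝ) (k2 : Z1 * p = Zn * c2)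
    (k1 : Z1 * (1 - p) = Zn * c1) :
    c1 * (Zn * IA) + c2 * (Zn * IB) = Z1 * (p * IB + (1 - p) * IA) := by
  have h : Z1 * (p * IB + (1 - p) * IA) = (Z1 * p) * IB + (Z1 * (1 - p)) * IA := by ring
  rw [h, k2, k1]; ring

/-- **Lemma 2.2 (many-to-one).** For any `F : ℕⁿ → ℝ`,
`E[∑_{i=1}^n (w_i/W_n) e^{θ ht(u_i)} F(ht(u_i(1)), …, ht(u_i(n)))] = Z_n E[F(H_1, …, H_n)]`. -/
theorem many_to_one
    (w : ℕ → ℝ) (γ θ : ℝ)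
    (hw : GoodWeights w) (h1 : H1 w γ) (hθ : IsTheta γ θ)
    {Ω : Type*} [MeasurableSpace Ω] (P : Measure Ω) [IsProbabilityMeasure P]
    (par : ℕ → Ω → ℕ) (hwrt : IsWRT P w par)
    {Ω' : Type*} [MeasurableSpace Ω'] (P' : Measure Ω') [IsProbabilityMeasure P']
    (U : ℕ → Ω' → ℝ) (hU : IsIIDUniform P' U)
    (n : ℕ) (hn : 1 ≤ n) (F : (Fin n → ℕ) → ℝ) :
    ∫ ω, (∑ i ∈ Finset.Icc 1 n,
        (w i / psum w n) * Real.exp (θ * htFun (fun m => par m ω) i)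
          * F (fun k => htFun (fun m => par m ω)
                (ancFun (fun m => par m ω) ((k : ℕ) + 1) i))) ∂P
    = ZFun w θ n
      * ∫ ω', F (fun k => ∑ i ∈ Finset.Icc 2 ((k : ℕ) + 1),
          if U i ω' ≤ pWeight w θ i then 1 else 0) ∂P' := by
  have hθpos : 0 < θ := hθ.1
  clear h1 hθ
  revert hn F
  induction n with
  | zero => intro hn; exact absurd hn (by omega)
  | succ n ih =>
    intro hn1 F
    by_cases hn : 1 ≤ n
    · -- inductive step
      have ihA := ih hn (fun v => F (extA n v))
      have ihB := ih hn (fun v => F (extB n v))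
      beta_reduce at ihA ihB
      rw [P_side w θ hw hθpos P par hwrt n hn F, ihA, ihB,
        U_side w θ hw hθpos P' U hU n hn F]
      -- algebra with ZFun
      have hW1 : 0 < psum w (n + 1) := psum_pos hw (by omega)
      have hd : 0 < 1 + (Real.exp θ - 1) * (w (n + 1) / psum w (n + 1)) :=
        pdenom_pos hw hθpos (by omega)
      have hDq : (1 + (Real.exp θ - 1) * (w (n + 1) / psum w (n + 1)))
            * psum w (n + 1) = psum w (n + 1) + (Real.exp θ - 1) * w (n + 1) := by
        field_simp
      have hd2 : (0:ℝ) < psum w (n + 1) + (Real.exp θ - 1) * w (n + 1) := by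
        rw [← hDq]; exact mul_pos hd hW1
      have hcancel : (1 + (Real.exp θ - 1) * (w (n + 1) / psum w (n + 1)))
            * (Real.exp θ * (w (n + 1) / psum w (n + 1))
              / (1 + (Real.exp θ - 1) * (w (n + 1) / psum w (n + 1))))
          = Real.exp θ * (w (n + 1) / psum w (n + 1)) := by
        rw [mul_comm]
        exact div_mul_cancel₀ _ hd.ne'
      have key1 : ZFun w θ (n + 1) * pWeight w θ (n + 1)
          = ZFun w θ n * (w (n + 1) * Real.exp θ / psum w (n + 1)) := by
        rw [ZFun_succ w θ hn]
        unfold pWeight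
        rw [mul_assoc, hcancel]
        rw [mul_div_assoc]
        ring
      have key2 : ZFun w θ (n + 1) * (1 - pWeight w θ (n + 1))
          = ZFun w θ n * (psum w n / psum w (n + 1)) := by
        rw [ZFun_succ w θ hn]
        unfold pWeight
        rw [mul_assoc, mul_sub, hcancel, mul_one]
        congr 1
        have hps : psum w (n + 1) = psum w n + w (n + 1) := psum_succ w n
        rw [hps] at hW1 ⊢
        field_simp
        ring
      exact final_alg (ZFun w θ n) (ZFun w θ (n + 1)) (pWeight w θ (n + 1)) _ _ _ _ key1 key2
    · -- base case n = 0
      have h0 : n = 0 := by omega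
      subst h0
      simp only [show (0 : ℕ) + 1 = 1 from rfl]
      have hps : psum w 1 = w 1 := by
        unfold psum; rw [Finset.Icc_self, Finset.sum_singleton]
      have hL : ∀ ω, (∑ i ∈ Finset.Icc 1 1,
          (w i / psum w 1) * Real.exp (θ * htFun (fun m => par m ω) i)
            * F (fun k => htFun (fun m => par m ω)
                  (ancFun (fun m => par m ω) ((k : ℕ) + 1) i)))
          = F (fun _ => 0) := by
        intro ω
        rw [Finset.Icc_self, Finset.sum_singleton]
        have harg : (fun k : Fin 1 => htFun (fun m => par m ω)
            (ancFun (fun m => par m ω) ((k : ℕ) + 1) 1)) = (fun _ => (0 : ℕ)) := by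
          funext k
          rw [ancFun_of_le _ (by omega : 1 ≤ (k : ℕ) + 1), htFun_one]
        rw [harg, hps, div_self (ne_of_gt hw.1), htFun_one]
        norm_num
      have hZ1 : ZFun w θ 1 = 1 := by
        unfold ZFun; rw [Finset.Icc_eq_empty (by omega), Finset.prod_empty]
      have hR : ∀ ω', F (fun k : Fin 1 => ∑ i ∈ Finset.Icc 2 ((k : ℕ) + 1),
          if U i ω' ≤ pWeight w θ i then 1 else 0) = F (fun _ => 0) := by
        intro ω'
        congr 1
        funext k
        have hk : (k : ℕ) + 1 = 1 := by omega
        rw [hk, Finset.Icc_eq_empty (by omega), Finset.sum_empty]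
      rw [integral_congr_ae (Filter.Eventually.of_forall hL),
        integral_congr_ae (Filter.Eventually.of_forall hR), hZ1, integral_const,
        integral_const]
      simp
end WRTHeight
end
end

section
/- Let Y be a sum of finitely many independent Bernoulli random variables (with arbitrary parameters). Then for any integer b ≥ 0, E[ 1{Y−b ≥ 1} (Y−b) ] ≤ P(Y−b ≥ 1) · E[Y+1]. -/
noncomputable section
open scoped Classical
open MeasureTheory ProbabilityTheory Finset Filter

namespace WRTHeight

/-! ### Auxiliary lemmas for Lemma A.3 -/

private lemma sum_filter_lt_succ {n : ℕ} (g : Fin n → ℕ) (t : ℕ) :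
    ∑ j ∈ Finset.univ.filter (fun j : Fin n => (j : ℕ) < t + 1), g j
      = (∑ j ∈ Finset.univ.filter (fun j : Fin n => (j : ℕ) < t), g j)
        + ∑ j ∈ Finset.univ.filter (fun j : Fin n => (j : ℕ) = t), g j := by
  classical
  rw [Finset.sum_filter, Finset.sum_filter, Finset.sum_filter, ← Finset.sum_add_distrib]
  apply Finset.sum_congr rfl
  intro i _
  by_cases h1 : (i : ℕ) < t
  · rw [if_pos (by omega), if_pos h1, if_neg (by omega), add_zero]
  · by_cases h2 : (i : ℕ) = t
    · rw [if_pos (by omega), if_neg h1, if_pos h2, zero_add]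
    · rw [if_neg (by omega), if_neg h1, if_neg h2, add_zero]

private lemma sum_filter_eq_le_one {n : ℕ} (g : Fin n → ℕ) (hg : ∀ i, g i ≤ 1) (t : ℕ) :
    ∑ j ∈ Finset.univ.filter (fun j : Fin n => (j : ℕ) = t), g j ≤ 1 := by
  classical
  by_cases ht : t < n
  · have h : Finset.univ.filter (fun j : Fin n => (j : ℕ) = t) = {⟨t, ht⟩} := by
      ext j
      simp [Finset.mem_filter, Fin.ext_iff]
    rw [h, Finset.sum_singleton]
    exact hg _
  · have h : Finset.univ.filter (fun j : Fin n => (j : ℕ) = t) = ∅ := by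
      ext j
      simp only [Finset.mem_filter, Finset.mem_univ, true_and, Finset.notMem_empty, iff_false]
      have := j.isLt
      omega
    rw [h, Finset.sum_empty]
    exact Nat.zero_le 1

private lemma sum_split {n : ℕ} (g : Fin n → ℕ) (t : ℕ) :
    ∑ i, g i = (∑ j ∈ Finset.univ.filter (fun j : Fin n => (j : ℕ) < t), g j)
      + ∑ j ∈ Finset.univ.filter (fun j : Fin n => t ≤ (j : ℕ)), g j := by
  classical
  rw [← Finset.sum_filter_add_sum_filter_not Finset.univ (fun j : Fin n => (j : ℕ) < t)]
  congr 1
  apply Finset.sum_congr _ fun _ _ => rfl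
  ext j
  simp only [Finset.mem_filter, Finset.mem_univ, true_and]
  omega

private lemma indep_event_aux {Ω : Type*} [MeasurableSpace Ω] {P : Measure Ω}
    {n : ℕ} {B : Fin n → Ω → ℕ} (hmeas : ∀ i, Measurable (B i))
    (hindep : iIndepFun B P)
    (t b : ℕ) (i : Fin n) (hi : t + 1 ≤ (i : ℕ)) :
    P ({ω | b + 1 ≤ ∑ j ∈ Finset.univ.filter (fun j : Fin n => (j : ℕ) < t + 1), B j ω
          ∧ (∑ j ∈ Finset.univ.filter (fun j : Fin n => (j : ℕ) < t), B j ω) ≤ b}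
        ∩ {ω | B i ω = 1})
      = P {ω | b + 1 ≤ ∑ j ∈ Finset.univ.filter (fun j : Fin n => (j : ℕ) < t + 1), B j ω
          ∧ (∑ j ∈ Finset.univ.filter (fun j : Fin n => (j : ℕ) < t), B j ω) ≤ b}
        * P {ω | B i ω = 1} := by
  classical
  set Sfin : Finset (Fin n) := Finset.univ.filter (fun j : Fin n => (j : ℕ) < t + 1) with hSfin
  have hdisj : Disjoint Sfin ({i} : Finset (Fin n)) := by
    rw [Finset.disjoint_singleton_right, hSfin]
    simp only [Finset.mem_filter, Finset.mem_univ, true_and]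
    omega
  have hIF := hindep.indepFun_finset Sfin {i} hdisj hmeas
  set C : Set (Sfin → ℕ) :=
    {v | b + 1 ≤ ∑ j, v j ∧ (∑ j : Sfin, if ((j : Fin n) : ℕ) < t then v j else 0) ≤ b} with hC
  set D : Set (({i} : Finset (Fin n)) → ℕ) :=
    {v | v ⟨i, Finset.mem_singleton_self i⟩ = 1} with hD
  have hCm : MeasurableSet C := (Set.to_countable C).measurableSet
  have hDm : MeasurableSet D := (Set.to_countable D).measurableSet
  have eq1 : ∀ ω, (∑ j : Sfin, B (↑j) ω) = ∑ j ∈ Sfin, B j ω := fun ω =>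
    Finset.sum_coe_sort Sfin (fun j => B j ω)
  have eq2 : ∀ ω, (∑ j : Sfin, if ((j : Fin n) : ℕ) < t then B (↑j) ω else 0)
      = ∑ j ∈ Finset.univ.filter (fun j : Fin n => (j : ℕ) < t), B j ω := by
    intro ω
    rw [Finset.sum_coe_sort Sfin (fun j => if (j : ℕ) < t then B j ω else 0),
      ← Finset.sum_filter]
    congr 1
    rw [hSfin, Finset.filter_filter]
    ext j
    simp only [Finset.mem_filter, Finset.mem_univ, true_and]
    omega
  have h1 : {ω | b + 1 ≤ ∑ j ∈ Sfin, B j ω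
        ∧ (∑ j ∈ Finset.univ.filter (fun j : Fin n => (j : ℕ) < t), B j ω) ≤ b}
      = (fun ω (j : Sfin) => B (↑j) ω) ⁻¹' C := by
    ext ω
    simp only [Set.mem_setOf_eq, Set.mem_preimage, hC, eq1 ω, eq2 ω]
  have h2 : {ω | B i ω = 1} = (fun ω (j : ({i} : Finset (Fin n))) => B (↑j) ω) ⁻¹' D := by
    ext ω
    simp only [Set.mem_setOf_eq, Set.mem_preimage, hD]
  rw [h1, h2]
  exact hIF.measure_inter_preimage_eq_mul C D hCm hDm

/-- **Lemma A.3.** If `Y` is a sum of independent Bernoulli random variables, then for any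
integer `b ≥ 0`, `E[1{Y-b ≥ 1}(Y-b)] ≤ P(Y-b ≥ 1) E[Y+1]`. -/
theorem bernoulli_sum_truncated_bound
    (n : ℕ) {Ω : Type*} [MeasurableSpace Ω] (P : Measure Ω) [IsProbabilityMeasure P]
    (B : Fin n → Ω → ℕ) (hmeas : ∀ i, Measurable (B i))
    (hindep : iIndepFun B P)
    (p : Fin n → ℝ) (hp : ∀ i, p i ∈ Set.Icc (0:ℝ) 1)
    (hlaw : ∀ i, P {ω | B i ω = 1} = ENNReal.ofReal (p i)
              ∧ P {ω | B i ω = 0} = ENNReal.ofReal (1 - p i))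
    (b : ℕ) :
    ∫ ω, (if b + 1 ≤ ∑ i, B i ω then ((∑ i, B i ω : ℕ) : ℝ) - (b : ℝ) else 0) ∂P
      ≤ (P {ω | b + 1 ≤ ∑ i, B i ω}).toReal
          * ∫ ω, (((∑ i, B i ω : ℕ) : ℝ) + 1) ∂P := by
  classical
  set Y : Ω → ℕ := fun ω => ∑ i, B i ω with hYdef
  have hYapp : ∀ ω, (∑ i, B i ω) = Y ω := fun _ => rfl
  have hYmeas : Measurable Y := Finset.measurable_sum _ fun i _ => hmeas i
  set A : Fin n → Set Ω := fun i => {ω | B i ω = 1} with hAdef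
  have hAmeas : ∀ i, MeasurableSet (A i) := fun i => hmeas i (measurableSet_singleton 1)
  have hPA : ∀ i, P (A i) = ENNReal.ofReal (p i) := fun i => (hlaw i).1
  -- a.e. each `B i ≤ 1`
  have hae : ∀ᵐ ω ∂P, ∀ i, B i ω ≤ 1 := by
    rw [MeasureTheory.ae_all_iff]
    intro i
    have hdisj01 : Disjoint {ω | B i ω = 0} (A i) := by
      rw [Set.disjoint_left]
      intro ω h0 h1
      simp only [hAdef, Set.mem_setOf_eq] at h0 h1
      omega
    have h01 : P ({ω | B i ω = 0} ∪ A i) = 1 := by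
      rw [measure_union hdisj01 (hAmeas i), (hlaw i).2, hPA i,
        ← ENNReal.ofReal_add (by linarith [(hp i).2]) (hp i).1]
      norm_num
    have hcompl : P ({ω | B i ω = 0} ∪ A i)ᶜ = 0 := by
      have hm : MeasurableSet ({ω | B i ω = 0} ∪ A i) :=
        (hmeas i (measurableSet_singleton 0)).union (hAmeas i)
      exact (prob_compl_eq_zero_iff hm).mpr h01
    rw [ae_iff]
    refine measure_mono_null ?_ hcompl
    intro ω hω
    simp only [Set.mem_setOf_eq, not_le] at hω
    simp only [Set.mem_compl_iff, Set.mem_union, Set.mem_setOf_eq, hAdef]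
    push_neg
    omega
  -- indicator functions
  set I : Fin n → Ω → ℝ := fun i => (A i).indicator 1 with hIdef
  have hIint : ∀ i, Integrable (I i) P := fun i => (integrable_const 1).indicator (hAmeas i)
  have hIeq : ∀ᵐ ω ∂P, ∀ i, ((B i ω : ℝ)) = I i ω := by
    filter_upwards [hae] with ω hω i
    rcases Nat.le_one_iff_eq_zero_or_eq_one.mp (hω i) with h | h <;>
      simp [hIdef, hAdef, Set.indicator_apply, Set.mem_setOf_eq, h]
  have hIintegral : ∀ i, ∫ ω, I i ω ∂P = p i := by
    intro i
    simp only [hIdef]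
    rw [integral_indicator_one (hAmeas i), measureReal_def, hPA i, ENNReal.toReal_ofReal (hp i).1]
  have hBint : ∀ i, Integrable (fun ω => (B i ω : ℝ)) P := by
    intro i
    refine (hIint i).congr ?_
    filter_upwards [hIeq] with ω hω using (hω i).symm
  have hEB : ∀ i, ∫ ω, (B i ω : ℝ) ∂P = p i := by
    intro i
    rw [← hIintegral i]
    exact integral_congr_ae (by filter_upwards [hIeq] with ω hω using hω i)
  set M : ℝ := ∑ i, p i with hMdef
  have hYcast : ∀ ω, (Y ω : ℝ) = ∑ i, (B i ω : ℝ) := by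
    intro ω
    simp [← hYapp ω]
  have hYint : Integrable (fun ω => (Y ω : ℝ)) P := by
    have h : (fun ω => (Y ω : ℝ)) = fun ω => ∑ i, (B i ω : ℝ) := funext hYcast
    rw [h]
    exact integrable_finset_sum _ fun i _ => hBint i
  have hEY : ∫ ω, (Y ω : ℝ) ∂P = M := by
    have h : (fun ω => (Y ω : ℝ)) = fun ω => ∑ i, (B i ω : ℝ) := funext hYcast
    rw [h, integral_finset_sum _ fun i _ => hBint i, hMdef]
    exact Finset.sum_congr rfl fun i _ => hEB i
  have hRHS : ∫ ω, ((Y ω : ℝ) + 1) ∂P = M + 1 := by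
    rw [integral_add hYint (integrable_const 1), hEY, integral_const]
    simp
  -- partial sums and crossing events
  set S : ℕ → Ω → ℕ :=
    fun t ω => ∑ j ∈ Finset.univ.filter (fun j : Fin n => (j : ℕ) < t), B j ω with hSdef
  have hSmeas : ∀ t, Measurable (S t) := fun t => Finset.measurable_sum _ fun j _ => hmeas j
  have hSmono : ∀ ω, ∀ s t : ℕ, s ≤ t → S s ω ≤ S t ω := by
    intro ω s t hst
    apply Finset.sum_le_sum_of_subset
    intro j hj
    simp only [Finset.mem_filter, Finset.mem_univ, true_and] at *
    omega
  have hS0 : ∀ ω, S 0 ω = 0 := by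
    intro ω
    simp [hSdef]
  have hSn : ∀ ω, S n ω = Y ω := by
    intro ω
    rw [hSdef, ← hYapp ω]
    apply Finset.sum_congr _ fun _ _ => rfl
    ext j
    simp [j.isLt]
  set E : ℕ → Set Ω := fun t => {ω | b + 1 ≤ S (t + 1) ω ∧ S t ω ≤ b} with hEdef
  have hEmeas : ∀ t, MeasurableSet (E t) := by
    intro t
    have h : E t = S (t + 1) ⁻¹' {m | b + 1 ≤ m} ∩ S t ⁻¹' {m | m ≤ b} := rfl
    rw [h]
    exact ((hSmeas (t + 1)) (Set.to_countable _).measurableSet).inter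
      ((hSmeas t) (Set.to_countable _).measurableSet)
  have hEdisj' : ∀ s t : ℕ, s < t → Disjoint (E s) (E t) := by
    intro s t h
    rw [Set.disjoint_left]
    intro ω hs ht
    have h1 : b + 1 ≤ S (s + 1) ω := hs.1
    have h2 : S t ω ≤ b := ht.2
    have h3 := hSmono ω (s + 1) t h
    omega
  have hEdisj : (↑(Finset.range n) : Set ℕ).PairwiseDisjoint E := by
    intro s _ t _ hst
    rcases hst.lt_or_gt with h | h
    · exact hEdisj' s t h
    · exact (hEdisj' t s h).symm
  have hUnion : {ω | b + 1 ≤ Y ω} = ⋃ t ∈ Finset.range n, E t := by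
    ext ω
    simp only [Set.mem_setOf_eq, Set.mem_iUnion, Finset.mem_range, exists_prop, hEdef]
    constructor
    · intro hb
      have hex : ∃ t, b + 1 ≤ S t ω := ⟨n, by rw [hSn]; exact hb⟩
      have hTspec : b + 1 ≤ S (Nat.find hex) ω := Nat.find_spec hex
      have hT1 : 1 ≤ Nat.find hex := by
        rcases Nat.eq_zero_or_pos (Nat.find hex) with h | h
        · rw [h] at hTspec
          rw [hS0 ω] at hTspec
          omega
        · exact h
      have hTn : Nat.find hex ≤ n := Nat.find_le (by rw [hSn]; exact hb)
      refine ⟨Nat.find hex - 1, by omega, ?_, ?_⟩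
      · have h : Nat.find hex - 1 + 1 = Nat.find hex := by omega
        rw [h]
        exact hTspec
      · have h3 := Nat.find_min hex (m := Nat.find hex - 1) (by omega)
        omega
    · rintro ⟨t, htn, h1, h2⟩
      calc b + 1 ≤ S (t + 1) ω := h1
        _ ≤ S n ω := hSmono ω _ _ (by omega)
        _ = Y ω := hSn ω
  have hUmeas : MeasurableSet {ω | b + 1 ≤ Y ω} := hYmeas (Set.to_countable _).measurableSet
  have hg : Integrable (fun ω => (Y ω : ℝ) - (b : ℝ)) P := hYint.sub (integrable_const _)
  -- per-event bound
  have hkey : ∀ t ∈ Finset.range n,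
      ∫ ω in E t, ((Y ω : ℝ) - (b : ℝ)) ∂P ≤ (P (E t)).toReal * (M + 1) := by
    intro t _
    set Ft : Finset (Fin n) := Finset.univ.filter (fun i : Fin n => t + 1 ≤ (i : ℕ)) with hFt
    have hcongr : ∀ᵐ ω ∂P, ω ∈ E t → ((Y ω : ℝ) - (b : ℝ)) = 1 + ∑ i ∈ Ft, I i ω := by
      filter_upwards [hae, hIeq] with ω hω hωI hmem
      obtain ⟨hm1, hm2⟩ := hmem
      have e1 : S (t + 1) ω = S t ω
          + ∑ j ∈ Finset.univ.filter (fun j : Fin n => (j : ℕ) = t), B j ω := by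
        simp only [hSdef]
        exact sum_filter_lt_succ _ t
      have e2 : (∑ j ∈ Finset.univ.filter (fun j : Fin n => (j : ℕ) = t), B j ω) ≤ 1 :=
        sum_filter_eq_le_one _ hω t
      have hSt1 : S (t + 1) ω = b + 1 := by omega
      have e3 : Y ω = S (t + 1) ω + ∑ j ∈ Ft, B j ω := by
        simp only [hSdef, ← hYapp ω, hFt]
        exact sum_split _ (t + 1)
      have e4 : (Y ω : ℝ) = (b : ℝ) + 1 + ∑ j ∈ Ft, (B j ω : ℝ) := by
        rw [e3, hSt1]
        push_cast
        ring
      rw [e4]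
      have e5 : ∑ j ∈ Ft, (B j ω : ℝ) = ∑ j ∈ Ft, I j ω :=
        Finset.sum_congr rfl fun j _ => hωI j
      rw [e5]
      ring
    have hInt1 : IntegrableOn (fun _ : Ω => (1 : ℝ)) (E t) P := (integrable_const 1).integrableOn
    have hInt2 : IntegrableOn (fun ω => ∑ i ∈ Ft, I i ω) (E t) P :=
      (integrable_finset_sum _ fun i _ => hIint i).integrableOn
    have step1 : ∫ ω in E t, ((Y ω : ℝ) - (b : ℝ)) ∂P
        = ∫ ω in E t, (1 + ∑ i ∈ Ft, I i ω) ∂P := setIntegral_congr_ae (hEmeas t) hcongr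
    have step2 : ∫ ω in E t, (1 + ∑ i ∈ Ft, I i ω) ∂P
        = (P (E t)).toReal + ∑ i ∈ Ft, ∫ ω in E t, I i ω ∂P := by
      rw [integral_add hInt1 hInt2, setIntegral_const,
        integral_finset_sum _ fun i _ => (hIint i).integrableOn]
      simp [measureReal_def]
    have step3 : ∀ i ∈ Ft, ∫ ω in E t, I i ω ∂P = (P (E t)).toReal * p i := by
      intro i hiFt
      have hi : t + 1 ≤ (i : ℕ) := by
        simpa [hFt] using hiFt
      have e6 : ∫ ω in E t, I i ω ∂P = (P (E t ∩ A i)).toReal := by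
        rw [← integral_indicator (hEmeas t)]
        simp only [hIdef]
        rw [Set.indicator_indicator]
        exact integral_indicator_one ((hEmeas t).inter (hAmeas i))
      have e7 : P (E t ∩ A i) = P (E t) * P (A i) := by
        have h := indep_event_aux hmeas hindep t b i hi
        simp only [hEdef, hSdef, hAdef]
        exact h
      rw [e6, e7, hPA i, ENNReal.toReal_mul, ENNReal.toReal_ofReal (hp i).1]
    have step4 : ∑ i ∈ Ft, ∫ ω in E t, I i ω ∂P = (P (E t)).toReal * ∑ i ∈ Ft, p i := by
      rw [Finset.mul_sum]
      exact Finset.sum_congr rfl step3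
    have hsub : ∑ i ∈ Ft, p i ≤ M :=
      Finset.sum_le_sum_of_subset_of_nonneg (Finset.subset_univ Ft) fun i _ _ => (hp i).1
    rw [step1, step2, step4]
    have h8 : (P (E t)).toReal + (P (E t)).toReal * ∑ i ∈ Ft, p i
        = (P (E t)).toReal * (1 + ∑ i ∈ Ft, p i) := by ring
    rw [h8]
    apply mul_le_mul_of_nonneg_left _ ENNReal.toReal_nonneg
    linarith
  -- assemble
  simp only [hYapp]
  have hLHS : (∫ ω, (if b + 1 ≤ Y ω then (Y ω : ℝ) - (b : ℝ) else 0) ∂P)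
      = ∑ t ∈ Finset.range n, ∫ ω in E t, ((Y ω : ℝ) - (b : ℝ)) ∂P := by
    have hind : (fun ω => if b + 1 ≤ Y ω then (Y ω : ℝ) - (b : ℝ) else 0)
        = Set.indicator {ω | b + 1 ≤ Y ω} (fun ω => (Y ω : ℝ) - (b : ℝ)) := by
      funext ω
      rw [Set.indicator_apply]
      simp only [Set.mem_setOf_eq]
    rw [hind, integral_indicator hUmeas, hUnion]
    exact integral_biUnion_finset _ (fun t _ => hEmeas t) hEdisj fun t _ => hg.integrableOn
  have hPsum : (P {ω | b + 1 ≤ Y ω}).toReal = ∑ t ∈ Finset.range n, (P (E t)).toReal := by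
    rw [hUnion, measure_biUnion_finset hEdisj fun t _ => hEmeas t]
    exact ENNReal.toReal_sum fun t _ => measure_ne_top P _
  rw [hLHS, hRHS, hPsum, Finset.sum_mul]
  apply Finset.sum_le_sum
  exact hkey

end WRTHeight
end
end
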